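/- arXiv:1206.5822 — 2 statements merged into one kernel-verified Lean document; each statement's English description precedes it below -/
import Mathlib

section
/- Let a, b ∈ M_3(ℂ) be positive semidefinite with ⟨ψ_i, (a⊗b) ψ_i⟩ ≠ 0 for each of the nine domino states ψ_i, and let δ be the disturbance of a⊗b on the domino states. Then (1+√2)·δ·tr(a⊗b) ≥ |a_{00}|·|b_{01}|, and likewise (1+√2)·δ·tr(a⊗b) ≥ |a_{01}|·|b_{22}|, (1+√2)·δ·tr(a⊗b) ≥ |a_{22}|·|b_{12}|, and (1+√2)·δ·tr(a⊗b) ≥ |a_{12}|·|b_{00}|. -/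
set_option maxHeartbeats 1000000

open Matrix Kronecker
open scoped ComplexOrder

/-- The disturbance `δ` of the product operator `a ⊗ b` on the family of states `ψ`. -/
noncomputable def disturbance {n dA dB : ℕ} (ψ : Fin n → Fin dA × Fin dB → ℂ)
    (a : Matrix (Fin dA) (Fin dA) ℂ) (b : Matrix (Fin dB) (Fin dB) ℂ) : ℝ :=
  ⨆ p : {q : Fin n × Fin n // q.1 ≠ q.2},
    ‖star (ψ p.1.1) ⬝ᵥ (a ⊗ₖ b).mulVec (ψ p.1.2)‖ /
      Real.sqrt ((star (ψ p.1.1) ⬝ᵥ (a ⊗ₖ b).mulVec (ψ p.1.1)).re *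
        (star (ψ p.1.2) ⬝ᵥ (a ⊗ₖ b).mulVec (ψ p.1.2)).re)

/-- The standard basis vector `|i⟩` of `ℂ³`. -/
noncomputable def e3 (i : Fin 3) : Fin 3 → ℂ := fun k => if k = i then 1 else 0

/-- `|i + j⟩ = (|i⟩ + |j⟩)/√2`. -/
noncomputable def pl (i j : Fin 3) : Fin 3 → ℂ := fun k => (e3 i k + e3 j k) / (Real.sqrt 2 : ℂ)

/-- `|i − j⟩ = (|i⟩ − |j⟩)/√2`. -/
noncomputable def mi (i j : Fin 3) : Fin 3 → ℂ := fun k => (e3 i k - e3 j k) / (Real.sqrt 2 : ℂ)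

/-- The product vector `α ⊗ β` in `ℂ³ ⊗ ℂ³`. -/
noncomputable def kp (α β : Fin 3 → ℂ) : Fin 3 × Fin 3 → ℂ := fun p => α p.1 * β p.2

/-- The nine domino states in `ℂ³ ⊗ ℂ³`. -/
noncomputable def dominoStates : Fin 9 → Fin 3 × Fin 3 → ℂ :=
  ![kp (e3 1) (e3 1),
    kp (e3 0) (pl 0 1), kp (e3 0) (mi 0 1),
    kp (e3 2) (pl 1 2), kp (e3 2) (mi 1 2),
    kp (pl 1 2) (e3 0), kp (mi 1 2) (e3 0),
    kp (pl 0 1) (e3 2), kp (mi 0 1) (e3 2)]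

/-! ### Auxiliary lemmas -/

lemma star_e3_dot (k : Fin 3) (v : Fin 3 → ℂ) : star (e3 k) ⬝ᵥ v = v k := by
  simp [e3, dotProduct, Pi.star_apply, apply_ite (starRingEnd ℂ)]

lemma star_pl_dot (i j : Fin 3) (v : Fin 3 → ℂ) :
    star (pl i j) ⬝ᵥ v = (v i + v j) / (Real.sqrt 2 : ℂ) := by
  have h : star (pl i j) = fun p => (star (e3 i) p + star (e3 j) p) / (Real.sqrt 2 : ℂ) := by
    funext p
    simp [pl, Pi.star_apply, map_div₀, Complex.conj_ofReal]
  rw [show star (pl i j) ⬝ᵥ v = (star (e3 i) ⬝ᵥ v + star (e3 j) ⬝ᵥ v) / (Real.sqrt 2 : ℂ) by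
    rw [h]; simp only [dotProduct, Pi.star_apply, div_mul_eq_mul_div, add_mul,
      ← Finset.sum_div, Finset.sum_add_distrib]]
  rw [star_e3_dot, star_e3_dot]

lemma star_mi_dot (i j : Fin 3) (v : Fin 3 → ℂ) :
    star (mi i j) ⬝ᵥ v = (v i - v j) / (Real.sqrt 2 : ℂ) := by
  have h : star (mi i j) = fun p => (star (e3 i) p - star (e3 j) p) / (Real.sqrt 2 : ℂ) := by
    funext p
    simp [mi, Pi.star_apply, map_div₀, Complex.conj_ofReal]
  rw [show star (mi i j) ⬝ᵥ v = (star (e3 i) ⬝ᵥ v - star (e3 j) ⬝ᵥ v) / (Real.sqrt 2 : ℂ) by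
    rw [h]; simp only [dotProduct, Pi.star_apply, div_mul_eq_mul_div, sub_mul,
      ← Finset.sum_div, Finset.sum_sub_distrib]]
  rw [star_e3_dot, star_e3_dot]

lemma mulVec_e3 (m : Matrix (Fin 3) (Fin 3) ℂ) (l k : Fin 3) : m.mulVec (e3 l) k = m k l := by
  simp [mulVec, e3, dotProduct]

lemma mulVec_pl (m : Matrix (Fin 3) (Fin 3) ℂ) (i j k : Fin 3) :
    m.mulVec (pl i j) k = (m k i + m k j) / (Real.sqrt 2 : ℂ) := by
  simp only [mulVec, pl, e3, dotProduct, mul_div_assoc', mul_add, mul_ite, mul_one, mul_zero,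
    ← Finset.sum_div, Finset.sum_add_distrib, Finset.sum_ite_eq', Finset.mem_univ, if_true]

lemma mulVec_mi (m : Matrix (Fin 3) (Fin 3) ℂ) (i j k : Fin 3) :
    m.mulVec (mi i j) k = (m k i - m k j) / (Real.sqrt 2 : ℂ) := by
  simp only [mulVec, mi, e3, dotProduct, mul_div_assoc', mul_sub, mul_ite, mul_one, mul_zero,
    ← Finset.sum_div, Finset.sum_sub_distrib, Finset.sum_ite_eq', Finset.mem_univ, if_true]

lemma kp_dot (a b : Matrix (Fin 3) (Fin 3) ℂ) (x y x' y' : Fin 3 → ℂ) :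
    star (kp x y) ⬝ᵥ (a ⊗ₖ b).mulVec (kp x' y') =
      (star x ⬝ᵥ a.mulVec x') * (star y ⬝ᵥ b.mulVec y') := by
  simp only [dotProduct, mulVec, kroneckerMap_apply, kp, Pi.star_apply, star_mul',
    Fintype.sum_prod_type, Fin.sum_univ_three]
  ring

lemma cast_quad (x y : ℝ) (μ : ℂ) :
    ((x:ℂ) + μ + (star μ + (y:ℂ)))/2 = (((x+y)/2 + μ.re : ℝ):ℂ) := by
  rw [div_eq_iff (by norm_num : (2:ℂ) ≠ 0), Complex.star_def]
  apply Complex.ext <;> simp <;> ring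

lemma cast_quad_neg (x y : ℝ) (μ : ℂ) :
    ((x:ℂ) - μ - (star μ - (y:ℂ)))/2 = (((x+y)/2 - μ.re : ℝ):ℂ) := by
  rw [div_eq_iff (by norm_num : (2:ℂ) ≠ 0), Complex.star_def]
  apply Complex.ext <;> simp <;> ring

lemma re_quad_cross (x y : ℝ) (μ : ℂ) :
    (((x:ℂ) - μ + (star μ - (y:ℂ)))/2).re = (x-y)/2 := by
  have h : ((x:ℂ) - μ + (star μ - (y:ℂ)))/2 = (((x-y)/2 : ℝ):ℂ) - (μ.im:ℂ)*Complex.I := by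
    rw [div_eq_iff (by norm_num : (2:ℂ) ≠ 0), Complex.star_def]
    apply Complex.ext <;> simp <;> ring
  rw [h]; simp

lemma re_quad_cross' (x y : ℝ) (μ : ℂ) :
    (((x:ℂ) - star μ + (μ - (y:ℂ)))/2).re = (x-y)/2 := by
  have h := re_quad_cross x y (star μ)
  rwa [star_star] at h

lemma diag_real (m : Matrix (Fin 3) (Fin 3) ℂ) (hm : m.PosSemidef) (i : Fin 3) :
    m i i = (((m i i).re : ℝ) : ℂ) ∧ 0 ≤ (m i i).re := by
  have h := hm.dotProduct_mulVec_nonneg (e3 i)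
  rw [star_e3_dot] at h
  rw [show (m *ᵥ e3 i) i = m i i from mulVec_e3 m i i] at h
  obtain ⟨h1, h2⟩ := Complex.le_def.mp h
  refine ⟨Complex.ext (by simp) (by simpa using h2.symm), by simpa using h1⟩

lemma q_nonneg {m : Matrix (Fin 3) (Fin 3) ℂ} (hm : m.PosSemidef) (v : Fin 3 → ℂ) {r : ℝ}
    (h : star v ⬝ᵥ m.mulVec v = (r:ℂ)) : 0 ≤ r := by
  have h2 := hm.dotProduct_mulVec_nonneg v
  rw [show m *ᵥ v = m.mulVec v from rfl, h] at h2
  exact Complex.zero_le_real.mp h2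

lemma pos_pair {x y : ℝ} (hx : 0 ≤ x) (hy : 0 ≤ y) (h : x*y ≠ 0) : 0 < x ∧ 0 < y := by
  constructor
  · rcases hx.lt_or_eq with h'|h'
    · exact h'
    · exact absurd (by rw [← h']; ring) h
  · rcases hy.lt_or_eq with h'|h'
    · exact h'
    · exact absurd (by rw [← h']; ring) h

lemma trace_re (a b : Matrix (Fin 3) (Fin 3) ℂ) (ha : a.PosSemidef) (hb : b.PosSemidef) :
    ((a ⊗ₖ b).trace).re =
      ((a 0 0).re + (a 1 1).re + (a 2 2).re) * ((b 0 0).re + (b 1 1).re + (b 2 2).re) := by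
  rw [Matrix.trace_kronecker]
  rw [show a.trace = a 0 0 + a 1 1 + a 2 2 by simp [Matrix.trace, Fin.sum_univ_three, Matrix.diag],
      show b.trace = b 0 0 + b 1 1 + b 2 2 by simp [Matrix.trace, Fin.sum_univ_three, Matrix.diag],
      (diag_real a ha 0).1, (diag_real a ha 1).1, (diag_real a ha 2).1,
      (diag_real b hb 0).1, (diag_real b hb 1).1, (diag_real b hb 2).1]
  push_cast
  simp

lemma csEntry01 (m : Matrix (Fin 3) (Fin 3) ℂ) (hm : m.PosSemidef)
    (h1 : 0 < (m 1 1).re) : ‖m 0 1‖^2 ≤ (m 0 0).re * (m 1 1).re := by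
  set d := (m 1 1).re with hd
  have h11 : m 1 1 = (d:ℂ) := (diag_real m hm 1).1
  have h10 : m 1 0 = star (m 0 1) := (hm.1.apply 1 0).symm
  set x : Fin 3 → ℂ := ![(d:ℂ), -(star (m 0 1)), 0] with hx
  have hzz : m 0 1 * (starRingEnd ℂ) (m 0 1) = (‖m 0 1‖:ℂ)^2 := by
    rw [Complex.mul_conj, Complex.normSq_eq_norm_sq]
    push_cast; ring
  have hval : star x ⬝ᵥ m *ᵥ x = ((d^2:ℝ):ℂ) * m 0 0 - ((d * ‖m 0 1‖^2:ℝ):ℂ) := by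
    simp only [hx, dotProduct, mulVec, Fin.sum_univ_three, Pi.star_apply,
      Matrix.cons_val_zero, Matrix.cons_val_one, Matrix.head_cons,
      Matrix.cons_val_two, Matrix.tail_cons, star_neg, star_star, star_zero,
      Complex.star_def, Complex.conj_ofReal, map_neg, map_zero, Complex.conj_conj]
    rw [h10, h11, Complex.star_def]
    push_cast
    linear_combination (-(d:ℂ)) * hzz
  have hpos := hm.dotProduct_mulVec_nonneg x
  rw [hval] at hpos
  have hre := (Complex.le_def.mp hpos).1
  simp only [Complex.sub_re, Complex.zero_re, Complex.ofReal_re] at hre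
  rw [Complex.re_ofReal_mul] at hre
  nlinarith

lemma csEntry12 (m : Matrix (Fin 3) (Fin 3) ℂ) (hm : m.PosSemidef)
    (h1 : 0 < (m 2 2).re) : ‖m 1 2‖^2 ≤ (m 1 1).re * (m 2 2).re := by
  set d := (m 2 2).re with hd
  have h22 : m 2 2 = (d:ℂ) := (diag_real m hm 2).1
  have h21 : m 2 1 = star (m 1 2) := (hm.1.apply 2 1).symm
  set x : Fin 3 → ℂ := ![0, (d:ℂ), -(star (m 1 2))] with hx
  have hzz : m 1 2 * (starRingEnd ℂ) (m 1 2) = (‖m 1 2‖:ℂ)^2 := by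
    rw [Complex.mul_conj, Complex.normSq_eq_norm_sq]
    push_cast; ring
  have hval : star x ⬝ᵥ m *ᵥ x = ((d^2:ℝ):ℂ) * m 1 1 - ((d * ‖m 1 2‖^2:ℝ):ℂ) := by
    simp only [hx, dotProduct, mulVec, Fin.sum_univ_three, Pi.star_apply,
      Matrix.cons_val_zero, Matrix.cons_val_one, Matrix.head_cons,
      Matrix.cons_val_two, Matrix.tail_cons, star_neg, star_star, star_zero,
      Complex.star_def, Complex.conj_ofReal, map_neg, map_zero, Complex.conj_conj]
    rw [h21, h22, Complex.star_def]
    push_cast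
    linear_combination (-(d:ℂ)) * hzz
  have hpos := hm.dotProduct_mulVec_nonneg x
  rw [hval] at hpos
  have hre := (Complex.le_def.mp hpos).1
  simp only [Complex.sub_re, Complex.zero_re, Complex.ofReal_re] at hre
  rw [Complex.re_ofReal_mul] at hre
  nlinarith

lemma sqrt_le_half_add {x y : ℝ} (hx : 0 ≤ x) (hy : 0 ≤ y) :
    Real.sqrt (x*y) ≤ (x+y)/2 := by
  rw [show (x+y)/2 = Real.sqrt (((x+y)/2)^2) by
    rw [Real.sqrt_sq (by positivity)]]
  apply Real.sqrt_le_sqrt; nlinarith [sq_nonneg (x-y)]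

lemma one_le_sqrt_two : (1:ℝ) ≤ Real.sqrt 2 := by
  nlinarith [Real.sq_sqrt (by norm_num : (0:ℝ) ≤ 2), Real.sqrt_nonneg 2]

lemma domTemplate (δ T w α γ b0 b1 q6 q7 : ℝ) (μ z : ℂ)
    (hδ : 0 ≤ δ) (hw : 0 ≤ w) (hα : 0 < α) (hγ : 0 ≤ γ)
    (hb0 : 0 < b0) (hb1 : 0 < b1) (hT : 0 ≤ T)
    (hq6 : q6 = (α+γ)/2 + μ.re) (hq7 : q7 = (α+γ)/2 - μ.re)
    (hq6p : 0 ≤ q6) (hq7p : 0 ≤ q7)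
    (hz : ‖z‖^2 ≤ b0*b1)
    (hwT : w*(b0+b1) ≤ T)
    (h3 : |α-γ|/2 ≤ δ * Real.sqrt (q6*q7))
    (h4 : ‖(α:ℂ)+μ‖*‖z‖/Real.sqrt 2 ≤ δ * Real.sqrt ((α*b1)*(q6*b0)))
    (h5 : ‖(α:ℂ)-μ‖*‖z‖/Real.sqrt 2 ≤ δ * Real.sqrt ((α*b1)*(q7*b0))) :
    w*‖z‖ ≤ (1+Real.sqrt 2)*δ*T := by
  have hs1 := one_le_sqrt_two
  have hbb : Real.sqrt (b0*b1) ≤ (b0+b1)/2 := sqrt_le_half_add hb0.le hb1.le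
  have hznorm : ‖z‖ ≤ Real.sqrt (b0*b1) := by
    rw [Real.le_sqrt (norm_nonneg z) (by positivity)]; exact hz
  by_cases hcase : (1:ℝ)/2 ≤ δ
  · have h1 : w*‖z‖ ≤ w*((b0+b1)/2) := mul_le_mul_of_nonneg_left (hznorm.trans hbb) hw
    have h2 : w*((b0+b1)/2) ≤ T/2 := by linarith
    nlinarith [mul_le_mul_of_nonneg_right hcase hT]
  · push_neg at hcase
    have hqsum : q6 + q7 = α + γ := by rw [hq6, hq7]; ring
    have h3' : |α-γ| ≤ δ*(α+γ) := by
      have := h3.trans (mul_le_mul_of_nonneg_left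
        ((sqrt_le_half_add hq6p hq7p).trans_eq (by rw [hqsum])) hδ)
      linarith
    have hγ3 : γ ≤ 3*α := by
      have h1 : γ - α ≤ |α-γ| := by rw [abs_sub_comm]; exact le_abs_self _
      nlinarith
    have htri : 2*α*‖z‖ ≤ (‖(α:ℂ)+μ‖+‖(α:ℂ)-μ‖)*‖z‖ := by
      have h0 : (2*α : ℝ) = ‖((α:ℂ)+μ)+((α:ℂ)-μ)‖ := by
        rw [show ((α:ℂ)+μ)+((α:ℂ)-μ) = ((2*α:ℝ):ℂ) by push_cast; ring]
        rw [Complex.norm_real, Real.norm_eq_abs, abs_of_nonneg (by linarith)]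
      rw [h0]
      exact mul_le_mul_of_nonneg_right (norm_add_le _ _) (norm_nonneg z)
    have h45 : 2*α*‖z‖/Real.sqrt 2 ≤
        δ * (Real.sqrt ((α*b1)*(q6*b0)) + Real.sqrt ((α*b1)*(q7*b0))) := by
      have h2 : 2*α*‖z‖/Real.sqrt 2 ≤
          ‖(α:ℂ)+μ‖*‖z‖/Real.sqrt 2 + ‖(α:ℂ)-μ‖*‖z‖/Real.sqrt 2 := by
        rw [← add_div]
        gcongr
        · rw [← add_mul]; exact htri
      calc 2*α*‖z‖/Real.sqrt 2 ≤ _ := h2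
        _ ≤ _ := by rw [mul_add]; exact add_le_add h4 h5
    have hX : (0:ℝ) ≤ α*b1*b0 := by positivity
    have hrw6 : Real.sqrt ((α*b1)*(q6*b0)) = Real.sqrt (α*b1*b0) * Real.sqrt q6 := by
      rw [← Real.sqrt_mul hX]; ring_nf
    have hrw7 : Real.sqrt ((α*b1)*(q7*b0)) = Real.sqrt (α*b1*b0) * Real.sqrt q7 := by
      rw [← Real.sqrt_mul hX]; ring_nf
    have hssum : Real.sqrt q6 + Real.sqrt q7 ≤ Real.sqrt (8*α) := by
      apply Real.le_sqrt_of_sq_le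
      have hgm : Real.sqrt q6 * Real.sqrt q7 ≤ (q6+q7)/2 := by
        rw [← Real.sqrt_mul hq6p]; exact sqrt_le_half_add hq6p hq7p
      have e6 := Real.sq_sqrt hq6p
      have e7 := Real.sq_sqrt hq7p
      nlinarith [Real.sqrt_nonneg q6, Real.sqrt_nonneg q7]
    have hfin : Real.sqrt (α*b1*b0) * Real.sqrt (8*α) =
        2*α*(Real.sqrt 2 * Real.sqrt (b0*b1)) := by
      rw [← Real.sqrt_mul hX, ← Real.sqrt_mul (by norm_num : (0:ℝ) ≤ 2),
        show α*b1*b0*(8*α) = (2*α)^2*(2*(b0*b1)) by ring,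
        Real.sqrt_mul (by positivity), Real.sqrt_sq (by positivity)]
    have hbig : 2*α*‖z‖/Real.sqrt 2 ≤ δ*(2*α*(Real.sqrt 2 * Real.sqrt (b0*b1))) := by
      calc 2*α*‖z‖/Real.sqrt 2 ≤ _ := h45
        _ ≤ δ*(2*α*(Real.sqrt 2 * Real.sqrt (b0*b1))) := by
          rw [hrw6, hrw7, ← mul_add, ← hfin]
          exact mul_le_mul_of_nonneg_left
            (mul_le_mul_of_nonneg_left hssum (Real.sqrt_nonneg _)) hδ
    set s := Real.sqrt (b0*b1) with hs
    have hs2 : Real.sqrt 2 * Real.sqrt 2 = 2 := Real.mul_self_sqrt (by norm_num)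
    have hz2 : ‖z‖ ≤ 2*δ*s := by
      have h6 := (div_le_iff₀ (by positivity : (0:ℝ) < Real.sqrt 2)).mp hbig
      have h7 : δ*(2*α*(Real.sqrt 2 * s))*Real.sqrt 2 = 2*α*(2*δ*s) := by
        linear_combination (2*α*δ*s) * hs2
      rw [h7] at h6
      exact le_of_mul_le_mul_left h6 (by positivity)
    have h8 : w*‖z‖ ≤ w*(2*δ*s) := mul_le_mul_of_nonneg_left hz2 hw
    have h9 : w*(2*δ*s) ≤ w*(2*δ*((b0+b1)/2)) :=
      mul_le_mul_of_nonneg_left (mul_le_mul_of_nonneg_left hbb (by positivity)) hw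
    have h11 : δ*(w*(b0+b1)) ≤ δ*T := mul_le_mul_of_nonneg_left hwT hδ
    nlinarith [mul_nonneg hδ hT]

lemma claim_handler (δ T w α γ b0 b1 : ℝ) (μ z : ℂ)
    (hδ : 0 ≤ δ) (hT : 0 ≤ T) (hw : 0 ≤ w)
    (hα : 0 < α) (hγ : 0 ≤ γ) (hb0 : 0 < b0) (hb1 : 0 < b1)
    (hq6p : 0 ≤ (α+γ)/2 + μ.re) (hq7p : 0 ≤ (α+γ)/2 - μ.re)
    (hz : ‖z‖^2 ≤ b0*b1) (hwT : w*(b0+b1) ≤ T)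
    (k4 : ‖((α:ℂ)+μ)/(Real.sqrt 2:ℂ)*z‖ ≤ δ * Real.sqrt ((α*b1) * (((α+γ)/2+μ.re)*b0)))
    (k5 : ‖((α:ℂ)-μ)/(Real.sqrt 2:ℂ)*z‖ ≤ δ * Real.sqrt ((α*b1) * (((α+γ)/2-μ.re)*b0)))
    (k3 : |α-γ|/2 * b0 ≤ δ * Real.sqrt ((((α+γ)/2+μ.re)*b0) * ((((α+γ)/2-μ.re))*b0))) :
    w*‖z‖ ≤ (1+Real.sqrt 2)*δ*T := by
  have hnorm : ∀ u : ℂ, ‖u/(Real.sqrt 2:ℂ)*z‖ = ‖u‖*‖z‖/Real.sqrt 2 := by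
    intro u
    rw [norm_mul, norm_div, Complex.norm_real, Real.norm_eq_abs,
      abs_of_nonneg (Real.sqrt_nonneg 2), div_mul_eq_mul_div]
  have hsq3 : Real.sqrt ((((α+γ)/2+μ.re)*b0) * ((((α+γ)/2-μ.re))*b0))
      = Real.sqrt (((α+γ)/2+μ.re) * ((α+γ)/2-μ.re)) * b0 := by
    rw [show (((α+γ)/2+μ.re)*b0) * ((((α+γ)/2-μ.re))*b0)
        = (((α+γ)/2+μ.re) * ((α+γ)/2-μ.re)) * b0^2 by ring,
      Real.sqrt_mul (mul_nonneg hq6p hq7p), Real.sqrt_sq hb0.le]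
  refine domTemplate δ T w α γ b0 b1 _ _ μ z hδ hw hα hγ hb0 hb1 hT rfl rfl hq6p hq7p hz hwT
    ?_ ?_ ?_
  · rw [hsq3, ← mul_assoc] at k3
    exact (mul_le_mul_iff_left₀ hb0).mp k3
  · rw [← hnorm]; exact k4
  · rw [← hnorm]; exact k5

lemma cast_quad' (x y : ℝ) (μ : ℂ) :
    ((x:ℂ) + star μ + (μ + (y:ℂ)))/2 = (((x+y)/2 + μ.re : ℝ):ℂ) := by
  rw [div_eq_iff (by norm_num : (2:ℂ) ≠ 0), Complex.star_def]
  apply Complex.ext <;> simp <;> ring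

lemma cast_quad_neg' (x y : ℝ) (μ : ℂ) :
    ((x:ℂ) - star μ - (μ - (y:ℂ)))/2 = (((x+y)/2 - μ.re : ℝ):ℂ) := by
  rw [div_eq_iff (by norm_num : (2:ℂ) ≠ 0), Complex.star_def]
  apply Complex.ext <;> simp <;> ring
/-- Bounds on the four special off-diagonal products of entries of
`a` and `b` entailed by the disturbance of `a ⊗ b` on the domino states. -/
theorem stmt6
    (a b : Matrix (Fin 3) (Fin 3) ℂ) (ha : a.PosSemidef) (hb : b.PosSemidef)
    (hnz : ∀ i, star (dominoStates i) ⬝ᵥ (a ⊗ₖ b).mulVec (dominoStates i) ≠ 0) :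
    (1 + Real.sqrt 2) * disturbance dominoStates a b * ((a ⊗ₖ b).trace).re ≥
        ‖a 0 0‖ * ‖b 0 1‖ ∧
    (1 + Real.sqrt 2) * disturbance dominoStates a b * ((a ⊗ₖ b).trace).re ≥
        ‖a 0 1‖ * ‖b 2 2‖ ∧
    (1 + Real.sqrt 2) * disturbance dominoStates a b * ((a ⊗ₖ b).trace).re ≥
        ‖a 2 2‖ * ‖b 1 2‖ ∧
    (1 + Real.sqrt 2) * disturbance dominoStates a b * ((a ⊗ₖ b).trace).re ≥
        ‖a 1 2‖ * ‖b 0 0‖ := by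
  -- fresh real variables for the diagonal entries
  obtain ⟨ra0, hra0, hra0e⟩ : ∃ r : ℝ, 0 ≤ r ∧ a 0 0 = (r:ℂ) :=
    ⟨(a 0 0).re, (diag_real a ha 0).2, (diag_real a ha 0).1⟩
  obtain ⟨ra1, hra1, hra1e⟩ : ∃ r : ℝ, 0 ≤ r ∧ a 1 1 = (r:ℂ) :=
    ⟨(a 1 1).re, (diag_real a ha 1).2, (diag_real a ha 1).1⟩
  obtain ⟨ra2, hra2, hra2e⟩ : ∃ r : ℝ, 0 ≤ r ∧ a 2 2 = (r:ℂ) :=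
    ⟨(a 2 2).re, (diag_real a ha 2).2, (diag_real a ha 2).1⟩
  obtain ⟨rb0, hrb0, hrb0e⟩ : ∃ r : ℝ, 0 ≤ r ∧ b 0 0 = (r:ℂ) :=
    ⟨(b 0 0).re, (diag_real b hb 0).2, (diag_real b hb 0).1⟩
  obtain ⟨rb1, hrb1, hrb1e⟩ : ∃ r : ℝ, 0 ≤ r ∧ b 1 1 = (r:ℂ) :=
    ⟨(b 1 1).re, (diag_real b hb 1).2, (diag_real b hb 1).1⟩
  obtain ⟨rb2, hrb2, hrb2e⟩ : ∃ r : ℝ, 0 ≤ r ∧ b 2 2 = (r:ℂ) :=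
    ⟨(b 2 2).re, (diag_real b hb 2).2, (diag_real b hb 2).1⟩
  -- hermitian relations
  have ha21e : a 2 1 = star (a 1 2) := (ha.1.apply 2 1).symm
  have ha01e : a 0 1 = star (a 1 0) := (ha.1.apply 0 1).symm
  have hb21e : b 2 1 = star (b 1 2) := (hb.1.apply 2 1).symm
  have hb01e : b 0 1 = star (b 1 0) := (hb.1.apply 0 1).symm
  -- the trace
  have htr : ((a ⊗ₖ b).trace).re = (ra0+ra1+ra2) * (rb0+rb1+rb2) := by
    rw [trace_re a b ha hb, hra0e, hra1e, hra2e, hrb0e, hrb1e, hrb2e]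
    simp
  have hTnn : 0 ≤ (ra0+ra1+ra2) * (rb0+rb1+rb2) := by positivity
  -- √2 in ℂ
  have hs2c : (Real.sqrt 2:ℂ) * (Real.sqrt 2:ℂ) = 2 := by
    rw [← Complex.ofReal_mul, Real.mul_self_sqrt (by norm_num)]
    norm_num
  -- the supremum bound
  set f : {q : Fin 9 × Fin 9 // q.1 ≠ q.2} → ℝ := fun p =>
    ‖star (dominoStates p.1.1) ⬝ᵥ (a ⊗ₖ b).mulVec (dominoStates p.1.2)‖ /
      Real.sqrt ((star (dominoStates p.1.1) ⬝ᵥ (a ⊗ₖ b).mulVec (dominoStates p.1.1)).re *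
        (star (dominoStates p.1.2) ⬝ᵥ (a ⊗ₖ b).mulVec (dominoStates p.1.2)).re) with hf
  have hbdd : BddAbove (Set.range f) := (Set.finite_range f).bddAbove
  have hsup : ∀ p, f p ≤ disturbance dominoStates a b := fun p => le_ciSup hbdd p
  have hδnn : 0 ≤ disturbance dominoStates a b := by
    refine le_trans ?_ (hsup ⟨(0,1), by decide⟩)
    exact div_nonneg (norm_nonneg _) (Real.sqrt_nonneg _)
  have key : ∀ i j : Fin 9, i ≠ j →
      0 < (star (dominoStates i) ⬝ᵥ (a ⊗ₖ b).mulVec (dominoStates i)).re →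
      0 < (star (dominoStates j) ⬝ᵥ (a ⊗ₖ b).mulVec (dominoStates j)).re →
      ‖star (dominoStates i) ⬝ᵥ (a ⊗ₖ b).mulVec (dominoStates j)‖ ≤
        disturbance dominoStates a b *
          Real.sqrt ((star (dominoStates i) ⬝ᵥ (a ⊗ₖ b).mulVec (dominoStates i)).re *
            (star (dominoStates j) ⬝ᵥ (a ⊗ₖ b).mulVec (dominoStates j)).re) := by
    intro i j hij hi hj
    have h := hsup ⟨(i,j), hij⟩
    have hs : 0 < Real.sqrt ((star (dominoStates i) ⬝ᵥ (a ⊗ₖ b).mulVec (dominoStates i)).re *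
        (star (dominoStates j) ⬝ᵥ (a ⊗ₖ b).mulVec (dominoStates j)).re) :=
      Real.sqrt_pos.mpr (mul_pos hi hj)
    have h2 := mul_le_mul_of_nonneg_right h hs.le
    rwa [div_mul_cancel₀ _ hs.ne'] at h2
  refine ⟨?_, ?_, ?_, ?_⟩
  · -- claim 1 : ‖a 0 0‖ * ‖b 0 1‖
    have hA0 : star (e3 1) ⬝ᵥ a.mulVec (e3 1) = ((ra1:ℝ):ℂ) := by
      rw [star_e3_dot, show (a.mulVec (e3 1)) 1 = a 1 1 from mulVec_e3 a 1 1, hra1e]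
    have hB0 : star (e3 1) ⬝ᵥ b.mulVec (e3 1) = ((rb1:ℝ):ℂ) := by
      rw [star_e3_dot, show (b.mulVec (e3 1)) 1 = b 1 1 from mulVec_e3 b 1 1, hrb1e]
    have hB56 : star (e3 0) ⬝ᵥ b.mulVec (e3 0) = ((rb0:ℝ):ℂ) := by
      rw [star_e3_dot, show (b.mulVec (e3 0)) 0 = b 0 0 from mulVec_e3 b 0 0, hrb0e]
    have hA5 : star (pl 1 2) ⬝ᵥ a.mulVec (pl 1 2) = (((ra1+ra2)/2 + (a 1 2).re : ℝ):ℂ) := by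
      rw [star_pl_dot, mulVec_pl a 1 2 1, mulVec_pl a 1 2 2, ← add_div, div_div,
        hs2c, hra1e, hra2e, ha21e]
      exact cast_quad ra1 ra2 (a 1 2)
    have hA6 : star (mi 1 2) ⬝ᵥ a.mulVec (mi 1 2) = (((ra1+ra2)/2 - (a 1 2).re : ℝ):ℂ) := by
      rw [star_mi_dot, mulVec_mi a 1 2 1, mulVec_mi a 1 2 2, div_sub_div_same, div_div,
        hs2c, hra1e, hra2e, ha21e]
      exact cast_quad_neg ra1 ra2 (a 1 2)
    have hP0 : star (dominoStates 0) ⬝ᵥ (a ⊗ₖ b).mulVec (dominoStates 0)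
        = ((ra1*rb1 : ℝ):ℂ) := by
      rw [show dominoStates 0 = kp (e3 1) (e3 1) from rfl, kp_dot, hA0, hB0]
      push_cast; ring
    have hP5 : star (dominoStates 5) ⬝ᵥ (a ⊗ₖ b).mulVec (dominoStates 5)
        = ((((ra1+ra2)/2 + (a 1 2).re)*rb0 : ℝ):ℂ) := by
      rw [show dominoStates 5 = kp (pl 1 2) (e3 0) from rfl, kp_dot, hA5, hB56]
      push_cast; ring
    have hP6 : star (dominoStates 6) ⬝ᵥ (a ⊗ₖ b).mulVec (dominoStates 6)
        = ((((ra1+ra2)/2 - (a 1 2).re)*rb0 : ℝ):ℂ) := by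
      rw [show dominoStates 6 = kp (mi 1 2) (e3 0) from rfl, kp_dot, hA6, hB56]
      push_cast; ring
    have h0 := hnz 0; rw [hP0] at h0
    have h5 := hnz 5; rw [hP5] at h5
    have h6 := hnz 6; rw [hP6] at h6
    obtain ⟨hra1p, hrb1p⟩ := pos_pair (q_nonneg ha _ hA0) (q_nonneg hb _ hB0)
      (by exact_mod_cast h0)
    obtain ⟨hqa5p, hrb0p⟩ := pos_pair (q_nonneg ha _ hA5) (q_nonneg hb _ hB56)
      (by exact_mod_cast h5)
    obtain ⟨hqa6p, -⟩ := pos_pair (q_nonneg ha _ hA6) (q_nonneg hb _ hB56)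
      (by exact_mod_cast h6)
    -- cross terms
    have hC05 : star (dominoStates 0) ⬝ᵥ (a ⊗ₖ b).mulVec (dominoStates 5)
        = ((ra1:ℂ) + a 1 2)/(Real.sqrt 2:ℂ) * (b 1 0) := by
      rw [show dominoStates 0 = kp (e3 1) (e3 1) from rfl,
          show dominoStates 5 = kp (pl 1 2) (e3 0) from rfl, kp_dot,
          star_e3_dot, star_e3_dot, mulVec_pl a 1 2 1,
          show (b.mulVec (e3 0)) 1 = b 1 0 from mulVec_e3 b 0 1, hra1e]
    have hC06 : star (dominoStates 0) ⬝ᵥ (a ⊗ₖ b).mulVec (dominoStates 6)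
        = ((ra1:ℂ) - a 1 2)/(Real.sqrt 2:ℂ) * (b 1 0) := by
      rw [show dominoStates 0 = kp (e3 1) (e3 1) from rfl,
          show dominoStates 6 = kp (mi 1 2) (e3 0) from rfl, kp_dot,
          star_e3_dot, star_e3_dot, mulVec_mi a 1 2 1,
          show (b.mulVec (e3 0)) 1 = b 1 0 from mulVec_e3 b 0 1, hra1e]
    have hC56 : star (dominoStates 5) ⬝ᵥ (a ⊗ₖ b).mulVec (dominoStates 6)
        = ((ra1:ℂ) - a 1 2 + (star (a 1 2) - (ra2:ℂ)))/2 * ((rb0:ℝ):ℂ) := by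
      rw [show dominoStates 5 = kp (pl 1 2) (e3 0) from rfl,
          show dominoStates 6 = kp (mi 1 2) (e3 0) from rfl, kp_dot,
          star_pl_dot, mulVec_mi a 1 2 1, mulVec_mi a 1 2 2, ← add_div, div_div,
          hs2c, hB56, hra1e, hra2e, ha21e]
    -- positivity of the diagonal re's
    have pos0 : 0 < (star (dominoStates 0) ⬝ᵥ (a ⊗ₖ b).mulVec (dominoStates 0)).re := by
      rw [hP0]; simpa using mul_pos hra1p hrb1p
    have pos5 : 0 < (star (dominoStates 5) ⬝ᵥ (a ⊗ₖ b).mulVec (dominoStates 5)).re := by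
      rw [hP5]; simpa using mul_pos hqa5p hrb0p
    have pos6 : 0 < (star (dominoStates 6) ⬝ᵥ (a ⊗ₖ b).mulVec (dominoStates 6)).re := by
      rw [hP6]; simpa using mul_pos hqa6p hrb0p
    have key05 := key 0 5 (by decide) pos0 pos5
    rw [hC05, hP0, hP5] at key05
    simp only [Complex.ofReal_re] at key05
    have key06 := key 0 6 (by decide) pos0 pos6
    rw [hC06, hP0, hP6] at key06
    simp only [Complex.ofReal_re] at key06
    have key56 := key 5 6 (by decide) pos5 pos6
    rw [hC56, hP5, hP6] at key56
    simp only [Complex.ofReal_re] at key56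
    have hlow : |ra1-ra2|/2 * rb0 ≤
        ‖((ra1:ℂ) - a 1 2 + (star (a 1 2) - (ra2:ℂ)))/2 * ((rb0:ℝ):ℂ)‖ := by
      rw [norm_mul, Complex.norm_real, Real.norm_eq_abs, abs_of_nonneg hrb0p.le]
      apply mul_le_mul_of_nonneg_right ?_ hrb0p.le
      have h1 : |((((ra1:ℂ) - a 1 2 + (star (a 1 2) - (ra2:ℂ)))/2)).re| ≤
          ‖((ra1:ℂ) - a 1 2 + (star (a 1 2) - (ra2:ℂ)))/2‖ := by
        exact Complex.abs_re_le_norm _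
      rwa [re_quad_cross, abs_div, abs_two] at h1
    -- Cauchy–Schwarz
    have hb11re : (b 1 1).re = rb1 := by rw [hrb1e]; simp
    have hb00re : (b 0 0).re = rb0 := by rw [hrb0e]; simp
    have hcs := csEntry01 b hb (by rw [hb11re]; exact hrb1p)
    rw [hb00re, hb11re] at hcs
    have hb10n : ‖b 1 0‖ = ‖b 0 1‖ := by rw [hb01e, norm_star]
    rw [← hb10n] at hcs
    -- finish
    have final := claim_handler (disturbance dominoStates a b)
      ((ra0+ra1+ra2) * (rb0+rb1+rb2)) ra0 ra1 ra2 rb0 rb1 (a 1 2) (b 1 0)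
      hδnn hTnn hra0 hra1p hra2 hrb0p hrb1p
      (q_nonneg ha _ hA5) (q_nonneg ha _ hA6) hcs
      (by nlinarith) key05 key06 (hlow.trans key56)
    rw [ge_iff_le, show ‖a 0 0‖ = ra0 by rw [hra0e, Complex.norm_real, Real.norm_eq_abs,
      abs_of_nonneg hra0], ← hb10n, htr]
    exact final
  · -- claim 2 : ‖a 0 1‖ * ‖b 2 2‖
    have hb10e : b 1 0 = star (b 0 1) := (hb.1.apply 1 0).symm
    have hre_b : (b 0 1).re = (b 1 0).re := by rw [hb01e]; simp
    have hA12 : star (e3 0) ⬝ᵥ a.mulVec (e3 0) = ((ra0:ℝ):ℂ) := by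
      rw [star_e3_dot, show (a.mulVec (e3 0)) 0 = a 0 0 from mulVec_e3 a 0 0, hra0e]
    have hA0 : star (e3 1) ⬝ᵥ a.mulVec (e3 1) = ((ra1:ℝ):ℂ) := by
      rw [star_e3_dot, show (a.mulVec (e3 1)) 1 = a 1 1 from mulVec_e3 a 1 1, hra1e]
    have hB0 : star (e3 1) ⬝ᵥ b.mulVec (e3 1) = ((rb1:ℝ):ℂ) := by
      rw [star_e3_dot, show (b.mulVec (e3 1)) 1 = b 1 1 from mulVec_e3 b 1 1, hrb1e]
    have hB1 : star (pl 0 1) ⬝ᵥ b.mulVec (pl 0 1) = (((rb0+rb1)/2 + (b 1 0).re : ℝ):ℂ) := by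
      rw [star_pl_dot, mulVec_pl b 0 1 0, mulVec_pl b 0 1 1, ← add_div, div_div,
        hs2c, hrb0e, hrb1e, hb10e]
      exact (cast_quad rb0 rb1 (b 0 1)).trans (by simp)
    have hB2 : star (mi 0 1) ⬝ᵥ b.mulVec (mi 0 1) = (((rb0+rb1)/2 - (b 1 0).re : ℝ):ℂ) := by
      rw [star_mi_dot, mulVec_mi b 0 1 0, mulVec_mi b 0 1 1, div_sub_div_same, div_div,
        hs2c, hrb0e, hrb1e, hb10e]
      exact (cast_quad_neg rb0 rb1 (b 0 1)).trans (by simp)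
    have hP0 : star (dominoStates 0) ⬝ᵥ (a ⊗ₖ b).mulVec (dominoStates 0)
        = ((rb1*ra1 : ℝ):ℂ) := by
      rw [show dominoStates 0 = kp (e3 1) (e3 1) from rfl, kp_dot, hA0, hB0]
      push_cast; ring
    have hP1 : star (dominoStates 1) ⬝ᵥ (a ⊗ₖ b).mulVec (dominoStates 1)
        = ((((rb1+rb0)/2 + (b 1 0).re)*ra0 : ℝ):ℂ) := by
      rw [show dominoStates 1 = kp (e3 0) (pl 0 1) from rfl, kp_dot, hA12, hB1]
      push_cast; ring
    have hP2 : star (dominoStates 2) ⬝ᵥ (a ⊗ₖ b).mulVec (dominoStates 2)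
        = ((((rb1+rb0)/2 - (b 1 0).re)*ra0 : ℝ):ℂ) := by
      rw [show dominoStates 2 = kp (e3 0) (mi 0 1) from rfl, kp_dot, hA12, hB2]
      push_cast; ring
    have h0 := hnz 0; rw [hP0] at h0
    have h1 := hnz 1; rw [hP1] at h1
    have h2 := hnz 2; rw [hP2] at h2
    obtain ⟨hrb1p, hra1p⟩ := pos_pair (q_nonneg hb _ hB0) (q_nonneg ha _ hA0)
      (by exact_mod_cast h0)
    have hq1nn : 0 ≤ (rb1+rb0)/2 + (b 1 0).re := by
      have := q_nonneg hb _ hB1; linarith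
    have hq2nn : 0 ≤ (rb1+rb0)/2 - (b 1 0).re := by
      have := q_nonneg hb _ hB2; linarith
    obtain ⟨hq1p, hra0p⟩ := pos_pair hq1nn (q_nonneg ha _ hA12) (by exact_mod_cast h1)
    obtain ⟨hq2p, -⟩ := pos_pair hq2nn (q_nonneg ha _ hA12) (by exact_mod_cast h2)
    have hC01 : star (dominoStates 0) ⬝ᵥ (a ⊗ₖ b).mulVec (dominoStates 1)
        = ((rb1:ℂ) + b 1 0)/(Real.sqrt 2:ℂ) * (a 1 0) := by
      rw [show dominoStates 0 = kp (e3 1) (e3 1) from rfl,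
          show dominoStates 1 = kp (e3 0) (pl 0 1) from rfl, kp_dot,
          star_e3_dot, star_e3_dot, mulVec_pl b 0 1 1,
          show (a.mulVec (e3 0)) 1 = a 1 0 from mulVec_e3 a 0 1, hrb1e]
      ring
    have hC02 : star (dominoStates 0) ⬝ᵥ (a ⊗ₖ b).mulVec (dominoStates 2)
        = -(((rb1:ℂ) - b 1 0)/(Real.sqrt 2:ℂ) * (a 1 0)) := by
      rw [show dominoStates 0 = kp (e3 1) (e3 1) from rfl,
          show dominoStates 2 = kp (e3 0) (mi 0 1) from rfl, kp_dot,
          star_e3_dot, star_e3_dot, mulVec_mi b 0 1 1,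
          show (a.mulVec (e3 0)) 1 = a 1 0 from mulVec_e3 a 0 1, hrb1e]
      ring
    have hC12 : star (dominoStates 1) ⬝ᵥ (a ⊗ₖ b).mulVec (dominoStates 2)
        = ((rb0:ℂ) - star (b 1 0) + (b 1 0 - (rb1:ℂ)))/2 * ((ra0:ℝ):ℂ) := by
      rw [show dominoStates 1 = kp (e3 0) (pl 0 1) from rfl,
          show dominoStates 2 = kp (e3 0) (mi 0 1) from rfl, kp_dot, hA12,
          star_pl_dot, mulVec_mi b 0 1 0, mulVec_mi b 0 1 1, ← add_div, div_div,
          hs2c, hrb0e, hrb1e, hb01e]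
      ring
    have pos0 : 0 < (star (dominoStates 0) ⬝ᵥ (a ⊗ₖ b).mulVec (dominoStates 0)).re := by
      rw [hP0]; simpa using mul_pos hrb1p hra1p
    have pos1 : 0 < (star (dominoStates 1) ⬝ᵥ (a ⊗ₖ b).mulVec (dominoStates 1)).re := by
      rw [hP1]; simpa using mul_pos hq1p hra0p
    have pos2 : 0 < (star (dominoStates 2) ⬝ᵥ (a ⊗ₖ b).mulVec (dominoStates 2)).re := by
      rw [hP2]; simpa using mul_pos hq2p hra0p
    have key01 := key 0 1 (by decide) pos0 pos1
    rw [hC01, hP0, hP1] at key01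
    simp only [Complex.ofReal_re] at key01
    have key02 := key 0 2 (by decide) pos0 pos2
    rw [hC02, hP0, hP2, norm_neg] at key02
    simp only [Complex.ofReal_re] at key02
    have key12 := key 1 2 (by decide) pos1 pos2
    rw [hC12, hP1, hP2] at key12
    simp only [Complex.ofReal_re] at key12
    have hlow : |rb1-rb0|/2 * ra0 ≤
        ‖((rb0:ℂ) - star (b 1 0) + (b 1 0 - (rb1:ℂ)))/2 * ((ra0:ℝ):ℂ)‖ := by
      rw [norm_mul, Complex.norm_real, Real.norm_eq_abs, abs_of_nonneg hra0p.le]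
      apply mul_le_mul_of_nonneg_right ?_ hra0p.le
      have h1 : |((((rb0:ℂ) - star (b 1 0) + (b 1 0 - (rb1:ℂ)))/2)).re| ≤
          ‖((rb0:ℂ) - star (b 1 0) + (b 1 0 - (rb1:ℂ)))/2‖ := by
        exact Complex.abs_re_le_norm _
      rwa [re_quad_cross', abs_div, abs_two, abs_sub_comm] at h1
    have ha11re : (a 1 1).re = ra1 := by rw [hra1e]; simp
    have ha00re : (a 0 0).re = ra0 := by rw [hra0e]; simp
    have hcs := csEntry01 a ha (by rw [ha11re]; exact hra1p)
    rw [ha00re, ha11re] at hcs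
    have ha10n : ‖a 1 0‖ = ‖a 0 1‖ := by rw [ha01e, norm_star]
    rw [← ha10n] at hcs
    have final := claim_handler (disturbance dominoStates a b)
      ((ra0+ra1+ra2) * (rb0+rb1+rb2)) rb2 rb1 rb0 ra0 ra1 (b 1 0) (a 1 0)
      hδnn hTnn hrb2 hrb1p hrb0 hra0p hra1p hq1nn hq2nn hcs
      (by nlinarith) key01 key02 (hlow.trans key12)
    rw [ge_iff_le, show ‖a 0 1‖ = ‖a 1 0‖ from ha10n.symm,
      show ‖b 2 2‖ = rb2 by rw [hrb2e, Complex.norm_real, Real.norm_eq_abs,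
        abs_of_nonneg hrb2], htr, mul_comm ‖a 1 0‖ rb2]
    exact final
  · -- claim 3 : ‖a 2 2‖ * ‖b 1 2‖
    have ha10e : a 1 0 = star (a 0 1) := (ha.1.apply 1 0).symm
    have hre_a : (a 0 1).re = (a 1 0).re := by rw [ha01e]; simp
    have hA0 : star (e3 1) ⬝ᵥ a.mulVec (e3 1) = ((ra1:ℝ):ℂ) := by
      rw [star_e3_dot, show (a.mulVec (e3 1)) 1 = a 1 1 from mulVec_e3 a 1 1, hra1e]
    have hB0 : star (e3 1) ⬝ᵥ b.mulVec (e3 1) = ((rb1:ℝ):ℂ) := by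
      rw [star_e3_dot, show (b.mulVec (e3 1)) 1 = b 1 1 from mulVec_e3 b 1 1, hrb1e]
    have hB78 : star (e3 2) ⬝ᵥ b.mulVec (e3 2) = ((rb2:ℝ):ℂ) := by
      rw [star_e3_dot, show (b.mulVec (e3 2)) 2 = b 2 2 from mulVec_e3 b 2 2, hrb2e]
    have hA7 : star (pl 0 1) ⬝ᵥ a.mulVec (pl 0 1) = (((ra0+ra1)/2 + (a 1 0).re : ℝ):ℂ) := by
      rw [star_pl_dot, mulVec_pl a 0 1 0, mulVec_pl a 0 1 1, ← add_div, div_div,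
        hs2c, hra0e, hra1e, ha01e]
      exact cast_quad' ra0 ra1 (a 1 0)
    have hA8 : star (mi 0 1) ⬝ᵥ a.mulVec (mi 0 1) = (((ra0+ra1)/2 - (a 1 0).re : ℝ):ℂ) := by
      rw [star_mi_dot, mulVec_mi a 0 1 0, mulVec_mi a 0 1 1, div_sub_div_same, div_div,
        hs2c, hra0e, hra1e, ha01e]
      exact cast_quad_neg' ra0 ra1 (a 1 0)
    have hP0 : star (dominoStates 0) ⬝ᵥ (a ⊗ₖ b).mulVec (dominoStates 0)
        = ((ra1*rb1 : ℝ):ℂ) := by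
      rw [show dominoStates 0 = kp (e3 1) (e3 1) from rfl, kp_dot, hA0, hB0]
      push_cast; ring
    have hP7 : star (dominoStates 7) ⬝ᵥ (a ⊗ₖ b).mulVec (dominoStates 7)
        = ((((ra1+ra0)/2 + (a 1 0).re)*rb2 : ℝ):ℂ) := by
      rw [show dominoStates 7 = kp (pl 0 1) (e3 2) from rfl, kp_dot, hA7, hB78]
      push_cast; ring
    have hP8 : star (dominoStates 8) ⬝ᵥ (a ⊗ₖ b).mulVec (dominoStates 8)
        = ((((ra1+ra0)/2 - (a 1 0).re)*rb2 : ℝ):ℂ) := by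
      rw [show dominoStates 8 = kp (mi 0 1) (e3 2) from rfl, kp_dot, hA8, hB78]
      push_cast; ring
    have h0 := hnz 0; rw [hP0] at h0
    have h7 := hnz 7; rw [hP7] at h7
    have h8 := hnz 8; rw [hP8] at h8
    obtain ⟨hra1p, hrb1p⟩ := pos_pair (q_nonneg ha _ hA0) (q_nonneg hb _ hB0)
      (by exact_mod_cast h0)
    have hq7nn : 0 ≤ (ra1+ra0)/2 + (a 1 0).re := by
      have := q_nonneg ha _ hA7; linarith
    have hq8nn : 0 ≤ (ra1+ra0)/2 - (a 1 0).re := by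
      have := q_nonneg ha _ hA8; linarith
    obtain ⟨hq7p, hrb2p⟩ := pos_pair hq7nn (q_nonneg hb _ hB78) (by exact_mod_cast h7)
    obtain ⟨hq8p, -⟩ := pos_pair hq8nn (q_nonneg hb _ hB78) (by exact_mod_cast h8)
    have hC07 : star (dominoStates 0) ⬝ᵥ (a ⊗ₖ b).mulVec (dominoStates 7)
        = ((ra1:ℂ) + a 1 0)/(Real.sqrt 2:ℂ) * (b 1 2) := by
      rw [show dominoStates 0 = kp (e3 1) (e3 1) from rfl,
          show dominoStates 7 = kp (pl 0 1) (e3 2) from rfl, kp_dot,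
          star_e3_dot, star_e3_dot, mulVec_pl a 0 1 1,
          show (b.mulVec (e3 2)) 1 = b 1 2 from mulVec_e3 b 2 1, hra1e]
      ring
    have hC08 : star (dominoStates 0) ⬝ᵥ (a ⊗ₖ b).mulVec (dominoStates 8)
        = -(((ra1:ℂ) - a 1 0)/(Real.sqrt 2:ℂ) * (b 1 2)) := by
      rw [show dominoStates 0 = kp (e3 1) (e3 1) from rfl,
          show dominoStates 8 = kp (mi 0 1) (e3 2) from rfl, kp_dot,
          star_e3_dot, star_e3_dot, mulVec_mi a 0 1 1,
          show (b.mulVec (e3 2)) 1 = b 1 2 from mulVec_e3 b 2 1, hra1e]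
      ring
    have hC78 : star (dominoStates 7) ⬝ᵥ (a ⊗ₖ b).mulVec (dominoStates 8)
        = ((ra0:ℂ) - star (a 1 0) + (a 1 0 - (ra1:ℂ)))/2 * ((rb2:ℝ):ℂ) := by
      rw [show dominoStates 7 = kp (pl 0 1) (e3 2) from rfl,
          show dominoStates 8 = kp (mi 0 1) (e3 2) from rfl, kp_dot, hB78,
          star_pl_dot, mulVec_mi a 0 1 0, mulVec_mi a 0 1 1, ← add_div, div_div,
          hs2c, hra0e, hra1e, ha01e]
    have pos0 : 0 < (star (dominoStates 0) ⬝ᵥ (a ⊗ₖ b).mulVec (dominoStates 0)).re := by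
      rw [hP0]; simpa using mul_pos hra1p hrb1p
    have pos7 : 0 < (star (dominoStates 7) ⬝ᵥ (a ⊗ₖ b).mulVec (dominoStates 7)).re := by
      rw [hP7]; simpa using mul_pos hq7p hrb2p
    have pos8 : 0 < (star (dominoStates 8) ⬝ᵥ (a ⊗ₖ b).mulVec (dominoStates 8)).re := by
      rw [hP8]; simpa using mul_pos hq8p hrb2p
    have key07 := key 0 7 (by decide) pos0 pos7
    rw [hC07, hP0, hP7] at key07
    simp only [Complex.ofReal_re] at key07
    have key08 := key 0 8 (by decide) pos0 pos8
    rw [hC08, hP0, hP8, norm_neg] at key08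
    simp only [Complex.ofReal_re] at key08
    have key78 := key 7 8 (by decide) pos7 pos8
    rw [hC78, hP7, hP8] at key78
    simp only [Complex.ofReal_re] at key78
    have hlow : |ra1-ra0|/2 * rb2 ≤
        ‖((ra0:ℂ) - star (a 1 0) + (a 1 0 - (ra1:ℂ)))/2 * ((rb2:ℝ):ℂ)‖ := by
      rw [norm_mul, Complex.norm_real, Real.norm_eq_abs, abs_of_nonneg hrb2p.le]
      apply mul_le_mul_of_nonneg_right ?_ hrb2p.le
      have h1 : |((((ra0:ℂ) - star (a 1 0) + (a 1 0 - (ra1:ℂ)))/2)).re| ≤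
          ‖((ra0:ℂ) - star (a 1 0) + (a 1 0 - (ra1:ℂ)))/2‖ := by
        exact Complex.abs_re_le_norm _
      rwa [re_quad_cross', abs_div, abs_two, abs_sub_comm] at h1
    have hb11re : (b 1 1).re = rb1 := by rw [hrb1e]; simp
    have hb22re : (b 2 2).re = rb2 := by rw [hrb2e]; simp
    have hcs := csEntry12 b hb (by rw [hb22re]; exact hrb2p)
    rw [hb11re, hb22re] at hcs
    rw [mul_comm] at hcs
    have final := claim_handler (disturbance dominoStates a b)
      ((ra0+ra1+ra2) * (rb0+rb1+rb2)) ra2 ra1 ra0 rb2 rb1 (a 1 0) (b 1 2)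
      hδnn hTnn hra2 hra1p hra0 hrb2p hrb1p hq7nn hq8nn hcs
      (by nlinarith) key07 key08 (hlow.trans key78)
    rw [ge_iff_le, show ‖a 2 2‖ = ra2 by rw [hra2e, Complex.norm_real, Real.norm_eq_abs,
      abs_of_nonneg hra2], htr]
    exact final
  · -- claim 4 : ‖a 1 2‖ * ‖b 0 0‖
    have hA0 : star (e3 1) ⬝ᵥ a.mulVec (e3 1) = ((ra1:ℝ):ℂ) := by
      rw [star_e3_dot, show (a.mulVec (e3 1)) 1 = a 1 1 from mulVec_e3 a 1 1, hra1e]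
    have hB0 : star (e3 1) ⬝ᵥ b.mulVec (e3 1) = ((rb1:ℝ):ℂ) := by
      rw [star_e3_dot, show (b.mulVec (e3 1)) 1 = b 1 1 from mulVec_e3 b 1 1, hrb1e]
    have hA34 : star (e3 2) ⬝ᵥ a.mulVec (e3 2) = ((ra2:ℝ):ℂ) := by
      rw [star_e3_dot, show (a.mulVec (e3 2)) 2 = a 2 2 from mulVec_e3 a 2 2, hra2e]
    have hB3 : star (pl 1 2) ⬝ᵥ b.mulVec (pl 1 2) = (((rb1+rb2)/2 + (b 1 2).re : ℝ):ℂ) := by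
      rw [star_pl_dot, mulVec_pl b 1 2 1, mulVec_pl b 1 2 2, ← add_div, div_div,
        hs2c, hrb1e, hrb2e, hb21e]
      exact cast_quad rb1 rb2 (b 1 2)
    have hB4 : star (mi 1 2) ⬝ᵥ b.mulVec (mi 1 2) = (((rb1+rb2)/2 - (b 1 2).re : ℝ):ℂ) := by
      rw [star_mi_dot, mulVec_mi b 1 2 1, mulVec_mi b 1 2 2, div_sub_div_same, div_div,
        hs2c, hrb1e, hrb2e, hb21e]
      exact cast_quad_neg rb1 rb2 (b 1 2)
    have hP0 : star (dominoStates 0) ⬝ᵥ (a ⊗ₖ b).mulVec (dominoStates 0)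
        = ((rb1*ra1 : ℝ):ℂ) := by
      rw [show dominoStates 0 = kp (e3 1) (e3 1) from rfl, kp_dot, hA0, hB0]
      push_cast; ring
    have hP3 : star (dominoStates 3) ⬝ᵥ (a ⊗ₖ b).mulVec (dominoStates 3)
        = ((((rb1+rb2)/2 + (b 1 2).re)*ra2 : ℝ):ℂ) := by
      rw [show dominoStates 3 = kp (e3 2) (pl 1 2) from rfl, kp_dot, hA34, hB3]
      push_cast; ring
    have hP4 : star (dominoStates 4) ⬝ᵥ (a ⊗ₖ b).mulVec (dominoStates 4)
        = ((((rb1+rb2)/2 - (b 1 2).re)*ra2 : ℝ):ℂ) := by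
      rw [show dominoStates 4 = kp (e3 2) (mi 1 2) from rfl, kp_dot, hA34, hB4]
      push_cast; ring
    have h0 := hnz 0; rw [hP0] at h0
    have h3 := hnz 3; rw [hP3] at h3
    have h4 := hnz 4; rw [hP4] at h4
    obtain ⟨hrb1p, hra1p⟩ := pos_pair (q_nonneg hb _ hB0) (q_nonneg ha _ hA0)
      (by exact_mod_cast h0)
    have hq3nn : 0 ≤ (rb1+rb2)/2 + (b 1 2).re := q_nonneg hb _ hB3
    have hq4nn : 0 ≤ (rb1+rb2)/2 - (b 1 2).re := q_nonneg hb _ hB4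
    obtain ⟨hq3p, hra2p⟩ := pos_pair hq3nn (q_nonneg ha _ hA34) (by exact_mod_cast h3)
    obtain ⟨hq4p, -⟩ := pos_pair hq4nn (q_nonneg ha _ hA34) (by exact_mod_cast h4)
    have hC03 : star (dominoStates 0) ⬝ᵥ (a ⊗ₖ b).mulVec (dominoStates 3)
        = ((rb1:ℂ) + b 1 2)/(Real.sqrt 2:ℂ) * (a 1 2) := by
      rw [show dominoStates 0 = kp (e3 1) (e3 1) from rfl,
          show dominoStates 3 = kp (e3 2) (pl 1 2) from rfl, kp_dot,
          star_e3_dot, star_e3_dot, mulVec_pl b 1 2 1,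
          show (a.mulVec (e3 2)) 1 = a 1 2 from mulVec_e3 a 2 1, hrb1e]
      ring
    have hC04 : star (dominoStates 0) ⬝ᵥ (a ⊗ₖ b).mulVec (dominoStates 4)
        = ((rb1:ℂ) - b 1 2)/(Real.sqrt 2:ℂ) * (a 1 2) := by
      rw [show dominoStates 0 = kp (e3 1) (e3 1) from rfl,
          show dominoStates 4 = kp (e3 2) (mi 1 2) from rfl, kp_dot,
          star_e3_dot, star_e3_dot, mulVec_mi b 1 2 1,
          show (a.mulVec (e3 2)) 1 = a 1 2 from mulVec_e3 a 2 1, hrb1e]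
      ring
    have hC34 : star (dominoStates 3) ⬝ᵥ (a ⊗ₖ b).mulVec (dominoStates 4)
        = ((rb1:ℂ) - b 1 2 + (star (b 1 2) - (rb2:ℂ)))/2 * ((ra2:ℝ):ℂ) := by
      rw [show dominoStates 3 = kp (e3 2) (pl 1 2) from rfl,
          show dominoStates 4 = kp (e3 2) (mi 1 2) from rfl, kp_dot, hA34,
          star_pl_dot, mulVec_mi b 1 2 1, mulVec_mi b 1 2 2, ← add_div, div_div,
          hs2c, hrb1e, hrb2e, hb21e]
      ring
    have pos0 : 0 < (star (dominoStates 0) ⬝ᵥ (a ⊗ₖ b).mulVec (dominoStates 0)).re := by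
      rw [hP0]; simpa using mul_pos hrb1p hra1p
    have pos3 : 0 < (star (dominoStates 3) ⬝ᵥ (a ⊗ₖ b).mulVec (dominoStates 3)).re := by
      rw [hP3]; simpa using mul_pos hq3p hra2p
    have pos4 : 0 < (star (dominoStates 4) ⬝ᵥ (a ⊗ₖ b).mulVec (dominoStates 4)).re := by
      rw [hP4]; simpa using mul_pos hq4p hra2p
    have key03 := key 0 3 (by decide) pos0 pos3
    rw [hC03, hP0, hP3] at key03
    simp only [Complex.ofReal_re] at key03
    have key04 := key 0 4 (by decide) pos0 pos4
    rw [hC04, hP0, hP4] at key04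
    simp only [Complex.ofReal_re] at key04
    have key34 := key 3 4 (by decide) pos3 pos4
    rw [hC34, hP3, hP4] at key34
    simp only [Complex.ofReal_re] at key34
    have hlow : |rb1-rb2|/2 * ra2 ≤
        ‖((rb1:ℂ) - b 1 2 + (star (b 1 2) - (rb2:ℂ)))/2 * ((ra2:ℝ):ℂ)‖ := by
      rw [norm_mul, Complex.norm_real, Real.norm_eq_abs, abs_of_nonneg hra2p.le]
      apply mul_le_mul_of_nonneg_right ?_ hra2p.le
      have h1 : |((((rb1:ℂ) - b 1 2 + (star (b 1 2) - (rb2:ℂ)))/2)).re| ≤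
          ‖((rb1:ℂ) - b 1 2 + (star (b 1 2) - (rb2:ℂ)))/2‖ := by
        exact Complex.abs_re_le_norm _
      rwa [re_quad_cross, abs_div, abs_two] at h1
    have ha11re : (a 1 1).re = ra1 := by rw [hra1e]; simp
    have ha22re : (a 2 2).re = ra2 := by rw [hra2e]; simp
    have hcs := csEntry12 a ha (by rw [ha22re]; exact hra2p)
    rw [ha11re, ha22re] at hcs
    rw [mul_comm] at hcs
    have final := claim_handler (disturbance dominoStates a b)
      ((ra0+ra1+ra2) * (rb0+rb1+rb2)) rb0 rb1 rb2 ra2 ra1 (b 1 2) (a 1 2)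
      hδnn hTnn hrb0 hrb1p hrb2 hra2p hra1p hq3nn hq4nn hcs
      (by nlinarith) key03 key04 (hlow.trans key34)
    rw [ge_iff_le, show ‖b 0 0‖ = rb0 by rw [hrb0e, Complex.norm_real, Real.norm_eq_abs,
      abs_of_nonneg hrb0], htr, mul_comm ‖a 1 2‖ rb0]
    exact final
end

section
/- Let a, b ∈ M_3(ℂ) be positive semidefinite with ⟨ψ_i, (a⊗b) ψ_i⟩ ≠ 0 for each of the nine domino states ψ_i, and let δ be the disturbance of a⊗b on the domino states. Then for all i,j,k,t ∈ {0,1,2}: |a_{ii} b_{jj} − a_{kk} b_{tt}| ≤ 4δ·tr(a⊗b). -/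
open Matrix Kronecker
open scoped ComplexOrder

/- ### Auxiliary lemmas -/


lemma sqrt2_sq : (Real.sqrt 2 : ℂ) * (Real.sqrt 2 : ℂ) = 2 := by
  rw [← Complex.ofReal_mul, Real.mul_self_sqrt (by norm_num)]; norm_num

lemma sqrt2_inv : ((Real.sqrt 2 : ℂ))⁻¹ = (Real.sqrt 2 : ℂ) / 2 := by
  field_simp
  linear_combination (-1 : ℂ) * sqrt2_sq

lemma qform (a b : Matrix (Fin 3) (Fin 3) ℂ) (u v u' v' : Fin 3 → ℂ) :
    star (kp u v) ⬝ᵥ (a ⊗ₖ b).mulVec (kp u' v') =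
      (star u ⬝ᵥ a.mulVec u') * (star v ⬝ᵥ b.mulVec v') := by
  simp only [dotProduct, mulVec, Fintype.sum_prod_type, kroneckerMap_apply, kp,
    Pi.star_apply, star_mul', Fin.sum_univ_three]
  ring

lemma dot_e3 (a : Matrix (Fin 3) (Fin 3) ℂ) (i j : Fin 3) :
    star (e3 i) ⬝ᵥ a.mulVec (e3 j) = a i j := by
  simp [e3, dotProduct, mulVec, Complex.star_def, apply_ite (starRingEnd ℂ),
    boole_mul, mul_boole, Finset.sum_ite_eq', Finset.sum_ite_eq]

lemma dot_pp01 (a : Matrix (Fin 3) (Fin 3) ℂ) :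
    2 * (star (pl 0 1) ⬝ᵥ a.mulVec (pl 0 1)) = a 0 0 + a 0 1 + a 1 0 + a 1 1 := by
  have h2 := sqrt2_sq
  simp only [dotProduct, mulVec, Fin.sum_univ_three, pl, e3, Pi.star_apply, map_div₀,
    Complex.star_def, Complex.conj_ofReal, Fin.ext_iff, div_eq_mul_inv, sqrt2_inv, map_ofNat]
  norm_num [sqrt2_inv, map_ofNat]
  linear_combination ((a 0 0 + a 0 1 + a 1 0 + a 1 1) / 2) * h2

lemma dot_mm01 (a : Matrix (Fin 3) (Fin 3) ℂ) :
    2 * (star (mi 0 1) ⬝ᵥ a.mulVec (mi 0 1)) = a 0 0 - a 0 1 - a 1 0 + a 1 1 := by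
  have h2 := sqrt2_sq
  simp only [dotProduct, mulVec, Fin.sum_univ_three, mi, e3, Pi.star_apply, map_div₀,
    Complex.star_def, Complex.conj_ofReal, Fin.ext_iff, div_eq_mul_inv, sqrt2_inv, map_ofNat]
  norm_num [sqrt2_inv, map_ofNat]
  linear_combination ((a 0 0 - a 0 1 - a 1 0 + a 1 1) / 2) * h2

lemma dot_pm01 (a : Matrix (Fin 3) (Fin 3) ℂ) :
    2 * (star (pl 0 1) ⬝ᵥ a.mulVec (mi 0 1)) = a 0 0 - a 0 1 + a 1 0 - a 1 1 := by
  have h2 := sqrt2_sq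
  simp only [dotProduct, mulVec, Fin.sum_univ_three, pl, mi, e3, Pi.star_apply, map_div₀,
    Complex.star_def, Complex.conj_ofReal, Fin.ext_iff, div_eq_mul_inv, sqrt2_inv, map_ofNat]
  norm_num [sqrt2_inv, map_ofNat]
  linear_combination ((a 0 0 - a 0 1 + a 1 0 - a 1 1) / 2) * h2

lemma dot_pp12 (a : Matrix (Fin 3) (Fin 3) ℂ) :
    2 * (star (pl 1 2) ⬝ᵥ a.mulVec (pl 1 2)) = a 1 1 + a 1 2 + a 2 1 + a 2 2 := by
  have h2 := sqrt2_sq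
  simp only [dotProduct, mulVec, Fin.sum_univ_three, pl, e3, Pi.star_apply, map_div₀,
    Complex.star_def, Complex.conj_ofReal, Fin.ext_iff, div_eq_mul_inv, sqrt2_inv, map_ofNat]
  norm_num [sqrt2_inv, map_ofNat]
  linear_combination ((a 1 1 + a 1 2 + a 2 1 + a 2 2) / 2) * h2

lemma dot_mm12 (a : Matrix (Fin 3) (Fin 3) ℂ) :
    2 * (star (mi 1 2) ⬝ᵥ a.mulVec (mi 1 2)) = a 1 1 - a 1 2 - a 2 1 + a 2 2 := by
  have h2 := sqrt2_sq
  simp only [dotProduct, mulVec, Fin.sum_univ_three, mi, e3, Pi.star_apply, map_div₀,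
    Complex.star_def, Complex.conj_ofReal, Fin.ext_iff, div_eq_mul_inv, sqrt2_inv, map_ofNat]
  norm_num [sqrt2_inv, map_ofNat]
  linear_combination ((a 1 1 - a 1 2 - a 2 1 + a 2 2) / 2) * h2

lemma dot_pm12 (a : Matrix (Fin 3) (Fin 3) ℂ) :
    2 * (star (pl 1 2) ⬝ᵥ a.mulVec (mi 1 2)) = a 1 1 - a 1 2 + a 2 1 - a 2 2 := by
  have h2 := sqrt2_sq
  simp only [dotProduct, mulVec, Fin.sum_univ_three, pl, mi, e3, Pi.star_apply, map_div₀,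
    Complex.star_def, Complex.conj_ofReal, Fin.ext_iff, div_eq_mul_inv, sqrt2_inv, map_ofNat]
  norm_num [sqrt2_inv, map_ofNat]
  linear_combination ((a 1 1 - a 1 2 + a 2 1 - a 2 2) / 2) * h2

lemma sqrt_le_half {x y : ℝ} (hx : 0 ≤ x) (hy : 0 ≤ y) : Real.sqrt (x * y) ≤ (x + y) / 2 := by
  rw [show (x + y) / 2 = Real.sqrt (((x + y) / 2) ^ 2) from (Real.sqrt_sq (by positivity)).symm]
  exact Real.sqrt_le_sqrt (by nlinarith [sq_nonneg (x - y)])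

lemma repos {z : ℂ} (h0 : 0 ≤ z) (hne : z ≠ 0) : 0 < z.re := by
  rcases Complex.nonneg_iff.mp h0 with ⟨h1, h2⟩
  rcases h1.lt_or_eq with h | h
  · exact h
  · exfalso; apply hne; rw [Complex.ext_iff]
    constructor <;> simp [← h, ← h2]

lemma pair_bound (δ D1 D2 C cre r d S : ℝ) (hδ : 0 ≤ δ) (hD1 : 0 < D1) (hD2 : 0 < D2)
    (hr : 0 < r) (hsum : D1 + D2 = r * S) (heq : 2 * cre = r * d) (habs : |cre| ≤ C)
    (hC : C ≤ δ * Real.sqrt (D1 * D2)) : |d| ≤ δ * S := by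
  have hs : Real.sqrt (D1 * D2) ≤ (D1 + D2) / 2 := sqrt_le_half hD1.le hD2.le
  have h1 : r * |d| = |2 * cre| := by rw [heq, abs_mul, abs_of_pos hr]
  have h2 : |2 * cre| ≤ 2 * C := by rw [abs_mul, abs_two]; linarith [abs_nonneg cre]
  have h4 : 2 * (δ * Real.sqrt (D1 * D2)) ≤ δ * (D1 + D2) := by nlinarith
  have h5 : r * |d| ≤ δ * (r * S) := by rw [← hsum]; linarith
  exact (mul_le_mul_iff_right₀ hr).mp (by linarith : r * |d| ≤ r * (δ * S))

lemma endgame (δ SA SB : ℝ) (v w : Fin 3 → ℝ)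
    (hv : ∀ i, 0 ≤ v i) (hw : ∀ j, 0 ≤ w j) (hδ : 0 ≤ δ)
    (hSA : SA = v 0 + v 1 + v 2) (hSB : SB = w 0 + w 1 + w 2)
    (hv01 : |v 0 - v 1| ≤ δ * (v 0 + v 1)) (hv12 : |v 1 - v 2| ≤ δ * (v 1 + v 2))
    (hw01 : |w 0 - w 1| ≤ δ * (w 0 + w 1)) (hw12 : |w 1 - w 2| ≤ δ * (w 1 + w 2))
    (i j k t : Fin 3) :
    |v i * w j - v k * w t| ≤ 4 * δ * (SA * SB) := by
  have h3 : ∀ m : Fin 3, m = 0 ∨ m = 1 ∨ m = 2 := by decide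
  have hSAnn : 0 ≤ SA := by rw [hSA]; linarith [hv 0, hv 1, hv 2]
  have hSBnn : 0 ≤ SB := by rw [hSB]; linarith [hw 0, hw 1, hw 2]
  have hvle : ∀ m : Fin 3, v m ≤ SA := by
    intro m; rcases h3 m with rfl | rfl | rfl <;> rw [hSA] <;> linarith [hv 0, hv 1, hv 2]
  have hwle : ∀ m : Fin 3, w m ≤ SB := by
    intro m; rcases h3 m with rfl | rfl | rfl <;> rw [hSB] <;> linarith [hw 0, hw 1, hw 2]
  have hδv : ∀ m : Fin 3, 0 ≤ δ * v m := fun m => mul_nonneg hδ (hv m)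
  have hδw : ∀ m : Fin 3, 0 ≤ δ * w m := fun m => mul_nonneg hδ (hw m)
  have h2δSA : 0 ≤ 2 * δ * SA := by nlinarith
  have h2δSB : 0 ≤ 2 * δ * SB := by nlinarith
  have av01 : |v 0 - v 1| ≤ 2 * δ * SA := hv01.trans (by rw [hSA]; linarith [hδv 0, hδv 1, hδv 2])
  have av12 : |v 1 - v 2| ≤ 2 * δ * SA := hv12.trans (by rw [hSA]; linarith [hδv 0, hδv 1, hδv 2])
  have av02 : |v 0 - v 2| ≤ 2 * δ * SA :=
    (abs_sub_le (v 0) (v 1) (v 2)).trans (by rw [hSA]; linarith [hδv 0, hδv 1, hδv 2, hv01, hv12])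
  have aw01 : |w 0 - w 1| ≤ 2 * δ * SB := hw01.trans (by rw [hSB]; linarith [hδw 0, hδw 1, hδw 2])
  have aw12 : |w 1 - w 2| ≤ 2 * δ * SB := hw12.trans (by rw [hSB]; linarith [hδw 0, hδw 1, hδw 2])
  have aw02 : |w 0 - w 2| ≤ 2 * δ * SB :=
    (abs_sub_le (w 0) (w 1) (w 2)).trans (by rw [hSB]; linarith [hδw 0, hδw 1, hδw 2, hw01, hw12])
  have hA : ∀ i k : Fin 3, |v i - v k| ≤ 2 * δ * SA := by
    intro i k
    rcases h3 i with rfl | rfl | rfl <;> rcases h3 k with rfl | rfl | rfl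
    · simpa using h2δSA
    · exact av01
    · exact av02
    · rw [abs_sub_comm]; exact av01
    · simpa using h2δSA
    · exact av12
    · rw [abs_sub_comm]; exact av02
    · rw [abs_sub_comm]; exact av12
    · simpa using h2δSA
  have hB : ∀ j t : Fin 3, |w j - w t| ≤ 2 * δ * SB := by
    intro j t
    rcases h3 j with rfl | rfl | rfl <;> rcases h3 t with rfl | rfl | rfl
    · simpa using h2δSB
    · exact aw01
    · exact aw02
    · rw [abs_sub_comm]; exact aw01
    · simpa using h2δSB
    · exact aw12
    · rw [abs_sub_comm]; exact aw02
    · rw [abs_sub_comm]; exact aw12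
    · simpa using h2δSB
  have e : v i * w j - v k * w t = (v i - v k) * w j + v k * (w j - w t) := by ring
  rw [e]
  refine (abs_add_le _ _).trans ?_
  rw [abs_mul, abs_mul, abs_of_nonneg (hw j), abs_of_nonneg (hv k)]
  have t1 : |v i - v k| * w j ≤ (2 * δ * SA) * SB :=
    mul_le_mul (hA i k) (hwle j) (hw j) h2δSA
  have t2 : v k * |w j - w t| ≤ SA * (2 * δ * SB) :=
    mul_le_mul (hvle k) (hB j t) (abs_nonneg _) hSAnn
  nlinarith [t1, t2]

/-- For the domino states, all differences of diagonal entries of `a ⊗ b`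
are bounded by `4δ·tr(a⊗b)`. -/
theorem stmt7
    (a b : Matrix (Fin 3) (Fin 3) ℂ) (ha : a.PosSemidef) (hb : b.PosSemidef)
    (hnz : ∀ i, star (dominoStates i) ⬝ᵥ (a ⊗ₖ b).mulVec (dominoStates i) ≠ 0) :
    ∀ i j k t : Fin 3,
      ‖a i i * b j j - a k k * b t t‖ ≤
        4 * disturbance dominoStates a b * ((a ⊗ₖ b).trace).re := by
  intro i j k t
  have hds1 : dominoStates 1 = kp (e3 0) (pl 0 1) := rfl
  have hds2 : dominoStates 2 = kp (e3 0) (mi 0 1) := rfl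
  have hds3 : dominoStates 3 = kp (e3 2) (pl 1 2) := rfl
  have hds4 : dominoStates 4 = kp (e3 2) (mi 1 2) := rfl
  have hds5 : dominoStates 5 = kp (pl 1 2) (e3 0) := rfl
  have hds6 : dominoStates 6 = kp (mi 1 2) (e3 0) := rfl
  have hds7 : dominoStates 7 = kp (pl 0 1) (e3 2) := rfl
  have hds8 : dominoStates 8 = kp (mi 0 1) (e3 2) := rfl
  have hdiagA : ∀ m : Fin 3, a m m = ((a m m).re : ℂ) := by
    intro m
    have h := congrFun (congrFun ha.1 m) m
    rw [Matrix.conjTranspose_apply] at h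
    exact (Complex.conj_eq_iff_re.mp h).symm
  have hdiagB : ∀ m : Fin 3, b m m = ((b m m).re : ℂ) := by
    intro m
    have h := congrFun (congrFun hb.1 m) m
    rw [Matrix.conjTranspose_apply] at h
    exact (Complex.conj_eq_iff_re.mp h).symm
  have hoffA01 : (a 1 0).re = (a 0 1).re := by
    have h := congrFun (congrFun ha.1 0) 1
    rw [Matrix.conjTranspose_apply] at h
    rw [← h]; simp
  have hoffA12 : (a 2 1).re = (a 1 2).re := by
    have h := congrFun (congrFun ha.1 1) 2
    rw [Matrix.conjTranspose_apply] at h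
    rw [← h]; simp
  have hoffB01 : (b 1 0).re = (b 0 1).re := by
    have h := congrFun (congrFun hb.1 0) 1
    rw [Matrix.conjTranspose_apply] at h
    rw [← h]; simp
  have hoffB12 : (b 2 1).re = (b 1 2).re := by
    have h := congrFun (congrFun hb.1 1) 2
    rw [Matrix.conjTranspose_apply] at h
    rw [← h]; simp
  have hAnn : ∀ m : Fin 3, 0 ≤ (a m m).re := by
    intro m
    have h0 := ha.dotProduct_mulVec_nonneg (e3 m); rw [dot_e3] at h0
    exact (Complex.nonneg_iff.mp h0).1
  have hBnn : ∀ m : Fin 3, 0 ≤ (b m m).re := by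
    intro m
    have h0 := hb.dotProduct_mulVec_nonneg (e3 m); rw [dot_e3] at h0
    exact (Complex.nonneg_iff.mp h0).1
  have hδge : ∀ p : {q : Fin 9 × Fin 9 // q.1 ≠ q.2},
      ‖star (dominoStates p.1.1) ⬝ᵥ (a ⊗ₖ b).mulVec (dominoStates p.1.2)‖ /
        Real.sqrt ((star (dominoStates p.1.1) ⬝ᵥ (a ⊗ₖ b).mulVec (dominoStates p.1.1)).re *
          (star (dominoStates p.1.2) ⬝ᵥ (a ⊗ₖ b).mulVec (dominoStates p.1.2)).re) ≤
        disturbance dominoStates a b := by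
    intro p
    exact le_ciSup (f := fun p : {q : Fin 9 × Fin 9 // q.1 ≠ q.2} =>
      ‖star (dominoStates p.1.1) ⬝ᵥ (a ⊗ₖ b).mulVec (dominoStates p.1.2)‖ /
        Real.sqrt ((star (dominoStates p.1.1) ⬝ᵥ (a ⊗ₖ b).mulVec (dominoStates p.1.1)).re *
          (star (dominoStates p.1.2) ⬝ᵥ (a ⊗ₖ b).mulVec (dominoStates p.1.2)).re))
      (Set.Finite.bddAbove (Set.finite_range _)) p
  have hδ0 : 0 ≤ disturbance dominoStates a b :=
    le_trans (by positivity) (hδge ⟨(0, 1), by decide⟩)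
  -- ## Pair (1,2)
  have hn1 : 2 * (star (dominoStates 1) ⬝ᵥ (a ⊗ₖ b).mulVec (dominoStates 1)) =
      a 0 0 * (b 0 0 + b 0 1 + b 1 0 + b 1 1) := by
    rw [hds1, qform, dot_e3, mul_left_comm, dot_pp01]
  have hn2 : 2 * (star (dominoStates 2) ⬝ᵥ (a ⊗ₖ b).mulVec (dominoStates 2)) =
      a 0 0 * (b 0 0 - b 0 1 - b 1 0 + b 1 1) := by
    rw [hds2, qform, dot_e3, mul_left_comm, dot_mm01]
  have hnc12 : 2 * (star (dominoStates 1) ⬝ᵥ (a ⊗ₖ b).mulVec (dominoStates 2)) =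
      a 0 0 * (b 0 0 - b 0 1 + b 1 0 - b 1 1) := by
    rw [hds1, hds2, qform, dot_e3, mul_left_comm, dot_pm01]
  have hpos1 : 0 < (star (dominoStates 1) ⬝ᵥ (a ⊗ₖ b).mulVec (dominoStates 1)).re := by
    refine repos ?_ (hnz 1)
    rw [hds1, qform]
    exact mul_nonneg (ha.dotProduct_mulVec_nonneg _) (hb.dotProduct_mulVec_nonneg _)
  have hpos2 : 0 < (star (dominoStates 2) ⬝ᵥ (a ⊗ₖ b).mulVec (dominoStates 2)).re := by
    refine repos ?_ (hnz 2)
    rw [hds2, qform]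
    exact mul_nonneg (ha.dotProduct_mulVec_nonneg _) (hb.dotProduct_mulVec_nonneg _)
  have hr1 : 2 * (star (dominoStates 1) ⬝ᵥ (a ⊗ₖ b).mulVec (dominoStates 1)).re =
      (a 0 0).re * ((b 0 0).re + (b 0 1).re + (b 1 0).re + (b 1 1).re) := by
    have h' := congrArg Complex.re hn1
    rw [hdiagA 0] at h'
    simp only [Complex.mul_re, Complex.add_re, Complex.sub_re, Complex.add_im, Complex.sub_im,
      Complex.ofReal_re, Complex.ofReal_im, Complex.re_ofNat, Complex.im_ofNat,
      zero_mul, mul_zero, sub_zero] at h'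
    linear_combination h'
  have hr2 : 2 * (star (dominoStates 2) ⬝ᵥ (a ⊗ₖ b).mulVec (dominoStates 2)).re =
      (a 0 0).re * ((b 0 0).re - (b 0 1).re - (b 1 0).re + (b 1 1).re) := by
    have h' := congrArg Complex.re hn2
    rw [hdiagA 0] at h'
    simp only [Complex.mul_re, Complex.add_re, Complex.sub_re, Complex.add_im, Complex.sub_im,
      Complex.ofReal_re, Complex.ofReal_im, Complex.re_ofNat, Complex.im_ofNat,
      zero_mul, mul_zero, sub_zero] at h'
    linear_combination h'
  have hrc12 : 2 * (star (dominoStates 1) ⬝ᵥ (a ⊗ₖ b).mulVec (dominoStates 2)).re =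
      (a 0 0).re * ((b 0 0).re - (b 0 1).re + (b 1 0).re - (b 1 1).re) := by
    have h' := congrArg Complex.re hnc12
    rw [hdiagA 0] at h'
    simp only [Complex.mul_re, Complex.add_re, Complex.sub_re, Complex.add_im, Complex.sub_im,
      Complex.ofReal_re, Complex.ofReal_im, Complex.re_ofNat, Complex.im_ofNat,
      zero_mul, mul_zero, sub_zero] at h'
    linear_combination h'
  have hA0pos : 0 < (a 0 0).re := by
    rcases (hAnn 0).lt_or_eq with h | h
    · exact h
    · exfalso; rw [← h, zero_mul] at hr1; linarith
  have hC12 : ‖star (dominoStates 1) ⬝ᵥ (a ⊗ₖ b).mulVec (dominoStates 2)‖ ≤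
      disturbance dominoStates a b *
        Real.sqrt ((star (dominoStates 1) ⬝ᵥ (a ⊗ₖ b).mulVec (dominoStates 1)).re *
          (star (dominoStates 2) ⬝ᵥ (a ⊗ₖ b).mulVec (dominoStates 2)).re) := by
    have h : ‖star (dominoStates 1) ⬝ᵥ (a ⊗ₖ b).mulVec (dominoStates 2)‖ /
        Real.sqrt ((star (dominoStates 1) ⬝ᵥ (a ⊗ₖ b).mulVec (dominoStates 1)).re *
          (star (dominoStates 2) ⬝ᵥ (a ⊗ₖ b).mulVec (dominoStates 2)).re) ≤
        disturbance dominoStates a b := hδge ⟨(1, 2), by decide⟩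
    rw [div_le_iff₀ (Real.sqrt_pos.mpr (mul_pos hpos1 hpos2))] at h
    exact h
  have habs12 : |(star (dominoStates 1) ⬝ᵥ (a ⊗ₖ b).mulVec (dominoStates 2)).re| ≤
      ‖star (dominoStates 1) ⬝ᵥ (a ⊗ₖ b).mulVec (dominoStates 2)‖ := by
    exact Complex.abs_re_le_norm _
  have hw01 : |(b 0 0).re - (b 1 1).re| ≤
      disturbance dominoStates a b * ((b 0 0).re + (b 1 1).re) := by
    refine pair_bound (disturbance dominoStates a b) _ _ _ _ ((a 0 0).re) _ _
      hδ0 hpos1 hpos2 hA0pos ?_ ?_ habs12 hC12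
    · linear_combination hr1 / 2 + hr2 / 2
    · linear_combination hrc12 + (a 0 0).re * hoffB01
  -- ## Pair (3,4)
  have hn3 : 2 * (star (dominoStates 3) ⬝ᵥ (a ⊗ₖ b).mulVec (dominoStates 3)) =
      a 2 2 * (b 1 1 + b 1 2 + b 2 1 + b 2 2) := by
    rw [hds3, qform, dot_e3, mul_left_comm, dot_pp12]
  have hn4 : 2 * (star (dominoStates 4) ⬝ᵥ (a ⊗ₖ b).mulVec (dominoStates 4)) =
      a 2 2 * (b 1 1 - b 1 2 - b 2 1 + b 2 2) := by
    rw [hds4, qform, dot_e3, mul_left_comm, dot_mm12]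
  have hnc34 : 2 * (star (dominoStates 3) ⬝ᵥ (a ⊗ₖ b).mulVec (dominoStates 4)) =
      a 2 2 * (b 1 1 - b 1 2 + b 2 1 - b 2 2) := by
    rw [hds3, hds4, qform, dot_e3, mul_left_comm, dot_pm12]
  have hpos3 : 0 < (star (dominoStates 3) ⬝ᵥ (a ⊗ₖ b).mulVec (dominoStates 3)).re := by
    refine repos ?_ (hnz 3)
    rw [hds3, qform]
    exact mul_nonneg (ha.dotProduct_mulVec_nonneg _) (hb.dotProduct_mulVec_nonneg _)
  have hpos4 : 0 < (star (dominoStates 4) ⬝ᵥ (a ⊗ₖ b).mulVec (dominoStates 4)).re := by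
    refine repos ?_ (hnz 4)
    rw [hds4, qform]
    exact mul_nonneg (ha.dotProduct_mulVec_nonneg _) (hb.dotProduct_mulVec_nonneg _)
  have hr3 : 2 * (star (dominoStates 3) ⬝ᵥ (a ⊗ₖ b).mulVec (dominoStates 3)).re =
      (a 2 2).re * ((b 1 1).re + (b 1 2).re + (b 2 1).re + (b 2 2).re) := by
    have h' := congrArg Complex.re hn3
    rw [hdiagA 2] at h'
    simp only [Complex.mul_re, Complex.add_re, Complex.sub_re, Complex.add_im, Complex.sub_im,
      Complex.ofReal_re, Complex.ofReal_im, Complex.re_ofNat, Complex.im_ofNat,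
      zero_mul, mul_zero, sub_zero] at h'
    linear_combination h'
  have hr4 : 2 * (star (dominoStates 4) ⬝ᵥ (a ⊗ₖ b).mulVec (dominoStates 4)).re =
      (a 2 2).re * ((b 1 1).re - (b 1 2).re - (b 2 1).re + (b 2 2).re) := by
    have h' := congrArg Complex.re hn4
    rw [hdiagA 2] at h'
    simp only [Complex.mul_re, Complex.add_re, Complex.sub_re, Complex.add_im, Complex.sub_im,
      Complex.ofReal_re, Complex.ofReal_im, Complex.re_ofNat, Complex.im_ofNat,
      zero_mul, mul_zero, sub_zero] at h'
    linear_combination h'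
  have hrc34 : 2 * (star (dominoStates 3) ⬝ᵥ (a ⊗ₖ b).mulVec (dominoStates 4)).re =
      (a 2 2).re * ((b 1 1).re - (b 1 2).re + (b 2 1).re - (b 2 2).re) := by
    have h' := congrArg Complex.re hnc34
    rw [hdiagA 2] at h'
    simp only [Complex.mul_re, Complex.add_re, Complex.sub_re, Complex.add_im, Complex.sub_im,
      Complex.ofReal_re, Complex.ofReal_im, Complex.re_ofNat, Complex.im_ofNat,
      zero_mul, mul_zero, sub_zero] at h'
    linear_combination h'
  have hA2pos : 0 < (a 2 2).re := by
    rcases (hAnn 2).lt_or_eq with h | h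
    · exact h
    · exfalso; rw [← h, zero_mul] at hr3; linarith
  have hC34 : ‖star (dominoStates 3) ⬝ᵥ (a ⊗ₖ b).mulVec (dominoStates 4)‖ ≤
      disturbance dominoStates a b *
        Real.sqrt ((star (dominoStates 3) ⬝ᵥ (a ⊗ₖ b).mulVec (dominoStates 3)).re *
          (star (dominoStates 4) ⬝ᵥ (a ⊗ₖ b).mulVec (dominoStates 4)).re) := by
    have h : ‖star (dominoStates 3) ⬝ᵥ (a ⊗ₖ b).mulVec (dominoStates 4)‖ /
        Real.sqrt ((star (dominoStates 3) ⬝ᵥ (a ⊗ₖ b).mulVec (dominoStates 3)).re *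
          (star (dominoStates 4) ⬝ᵥ (a ⊗ₖ b).mulVec (dominoStates 4)).re) ≤
        disturbance dominoStates a b := hδge ⟨(3, 4), by decide⟩
    rw [div_le_iff₀ (Real.sqrt_pos.mpr (mul_pos hpos3 hpos4))] at h
    exact h
  have habs34 : |(star (dominoStates 3) ⬝ᵥ (a ⊗ₖ b).mulVec (dominoStates 4)).re| ≤
      ‖star (dominoStates 3) ⬝ᵥ (a ⊗ₖ b).mulVec (dominoStates 4)‖ := by
    exact Complex.abs_re_le_norm _
  have hw12 : |(b 1 1).re - (b 2 2).re| ≤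
      disturbance dominoStates a b * ((b 1 1).re + (b 2 2).re) := by
    refine pair_bound (disturbance dominoStates a b) _ _ _ _ ((a 2 2).re) _ _
      hδ0 hpos3 hpos4 hA2pos ?_ ?_ habs34 hC34
    · linear_combination hr3 / 2 + hr4 / 2
    · linear_combination hrc34 + (a 2 2).re * hoffB12
  -- ## Pair (5,6)
  have hn5 : 2 * (star (dominoStates 5) ⬝ᵥ (a ⊗ₖ b).mulVec (dominoStates 5)) =
      (a 1 1 + a 1 2 + a 2 1 + a 2 2) * b 0 0 := by
    rw [hds5, qform, dot_e3, ← mul_assoc, dot_pp12]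
  have hn6 : 2 * (star (dominoStates 6) ⬝ᵥ (a ⊗ₖ b).mulVec (dominoStates 6)) =
      (a 1 1 - a 1 2 - a 2 1 + a 2 2) * b 0 0 := by
    rw [hds6, qform, dot_e3, ← mul_assoc, dot_mm12]
  have hnc56 : 2 * (star (dominoStates 5) ⬝ᵥ (a ⊗ₖ b).mulVec (dominoStates 6)) =
      (a 1 1 - a 1 2 + a 2 1 - a 2 2) * b 0 0 := by
    rw [hds5, hds6, qform, dot_e3, ← mul_assoc, dot_pm12]
  have hpos5 : 0 < (star (dominoStates 5) ⬝ᵥ (a ⊗ₖ b).mulVec (dominoStates 5)).re := by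
    refine repos ?_ (hnz 5)
    rw [hds5, qform]
    exact mul_nonneg (ha.dotProduct_mulVec_nonneg _) (hb.dotProduct_mulVec_nonneg _)
  have hpos6 : 0 < (star (dominoStates 6) ⬝ᵥ (a ⊗ₖ b).mulVec (dominoStates 6)).re := by
    refine repos ?_ (hnz 6)
    rw [hds6, qform]
    exact mul_nonneg (ha.dotProduct_mulVec_nonneg _) (hb.dotProduct_mulVec_nonneg _)
  have hr5 : 2 * (star (dominoStates 5) ⬝ᵥ (a ⊗ₖ b).mulVec (dominoStates 5)).re =
      ((a 1 1).re + (a 1 2).re + (a 2 1).re + (a 2 2).re) * (b 0 0).re := by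
    have h' := congrArg Complex.re hn5
    rw [hdiagB 0] at h'
    simp only [Complex.mul_re, Complex.add_re, Complex.sub_re, Complex.add_im, Complex.sub_im,
      Complex.ofReal_re, Complex.ofReal_im, Complex.re_ofNat, Complex.im_ofNat,
      zero_mul, mul_zero, sub_zero] at h'
    linear_combination h'
  have hr6 : 2 * (star (dominoStates 6) ⬝ᵥ (a ⊗ₖ b).mulVec (dominoStates 6)).re =
      ((a 1 1).re - (a 1 2).re - (a 2 1).re + (a 2 2).re) * (b 0 0).re := by
    have h' := congrArg Complex.re hn6
    rw [hdiagB 0] at h'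
    simp only [Complex.mul_re, Complex.add_re, Complex.sub_re, Complex.add_im, Complex.sub_im,
      Complex.ofReal_re, Complex.ofReal_im, Complex.re_ofNat, Complex.im_ofNat,
      zero_mul, mul_zero, sub_zero] at h'
    linear_combination h'
  have hrc56 : 2 * (star (dominoStates 5) ⬝ᵥ (a ⊗ₖ b).mulVec (dominoStates 6)).re =
      ((a 1 1).re - (a 1 2).re + (a 2 1).re - (a 2 2).re) * (b 0 0).re := by
    have h' := congrArg Complex.re hnc56
    rw [hdiagB 0] at h'
    simp only [Complex.mul_re, Complex.add_re, Complex.sub_re, Complex.add_im, Complex.sub_im,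
      Complex.ofReal_re, Complex.ofReal_im, Complex.re_ofNat, Complex.im_ofNat,
      zero_mul, mul_zero, sub_zero] at h'
    linear_combination h'
  have hB0pos : 0 < (b 0 0).re := by
    rcases (hBnn 0).lt_or_eq with h | h
    · exact h
    · exfalso; rw [← h, mul_zero] at hr5; linarith
  have hC56 : ‖star (dominoStates 5) ⬝ᵥ (a ⊗ₖ b).mulVec (dominoStates 6)‖ ≤
      disturbance dominoStates a b *
        Real.sqrt ((star (dominoStates 5) ⬝ᵥ (a ⊗ₖ b).mulVec (dominoStates 5)).re *
          (star (dominoStates 6) ⬝ᵥ (a ⊗ₖ b).mulVec (dominoStates 6)).re) := by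
    have h : ‖star (dominoStates 5) ⬝ᵥ (a ⊗ₖ b).mulVec (dominoStates 6)‖ /
        Real.sqrt ((star (dominoStates 5) ⬝ᵥ (a ⊗ₖ b).mulVec (dominoStates 5)).re *
          (star (dominoStates 6) ⬝ᵥ (a ⊗ₖ b).mulVec (dominoStates 6)).re) ≤
        disturbance dominoStates a b := hδge ⟨(5, 6), by decide⟩
    rw [div_le_iff₀ (Real.sqrt_pos.mpr (mul_pos hpos5 hpos6))] at h
    exact h
  have habs56 : |(star (dominoStates 5) ⬝ᵥ (a ⊗ₖ b).mulVec (dominoStates 6)).re| ≤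
      ‖star (dominoStates 5) ⬝ᵥ (a ⊗ₖ b).mulVec (dominoStates 6)‖ := by
    exact Complex.abs_re_le_norm _
  have hv12 : |(a 1 1).re - (a 2 2).re| ≤
      disturbance dominoStates a b * ((a 1 1).re + (a 2 2).re) := by
    refine pair_bound (disturbance dominoStates a b) _ _ _ _ ((b 0 0).re) _ _
      hδ0 hpos5 hpos6 hB0pos ?_ ?_ habs56 hC56
    · linear_combination hr5 / 2 + hr6 / 2
    · linear_combination hrc56 + (b 0 0).re * hoffA12
  -- ## Pair (7,8)
  have hn7 : 2 * (star (dominoStates 7) ⬝ᵥ (a ⊗ₖ b).mulVec (dominoStates 7)) =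
      (a 0 0 + a 0 1 + a 1 0 + a 1 1) * b 2 2 := by
    rw [hds7, qform, dot_e3, ← mul_assoc, dot_pp01]
  have hn8 : 2 * (star (dominoStates 8) ⬝ᵥ (a ⊗ₖ b).mulVec (dominoStates 8)) =
      (a 0 0 - a 0 1 - a 1 0 + a 1 1) * b 2 2 := by
    rw [hds8, qform, dot_e3, ← mul_assoc, dot_mm01]
  have hnc78 : 2 * (star (dominoStates 7) ⬝ᵥ (a ⊗ₖ b).mulVec (dominoStates 8)) =
      (a 0 0 - a 0 1 + a 1 0 - a 1 1) * b 2 2 := by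
    rw [hds7, hds8, qform, dot_e3, ← mul_assoc, dot_pm01]
  have hpos7 : 0 < (star (dominoStates 7) ⬝ᵥ (a ⊗ₖ b).mulVec (dominoStates 7)).re := by
    refine repos ?_ (hnz 7)
    rw [hds7, qform]
    exact mul_nonneg (ha.dotProduct_mulVec_nonneg _) (hb.dotProduct_mulVec_nonneg _)
  have hpos8 : 0 < (star (dominoStates 8) ⬝ᵥ (a ⊗ₖ b).mulVec (dominoStates 8)).re := by
    refine repos ?_ (hnz 8)
    rw [hds8, qform]
    exact mul_nonneg (ha.dotProduct_mulVec_nonneg _) (hb.dotProduct_mulVec_nonneg _)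
  have hr7 : 2 * (star (dominoStates 7) ⬝ᵥ (a ⊗ₖ b).mulVec (dominoStates 7)).re =
      ((a 0 0).re + (a 0 1).re + (a 1 0).re + (a 1 1).re) * (b 2 2).re := by
    have h' := congrArg Complex.re hn7
    rw [hdiagB 2] at h'
    simp only [Complex.mul_re, Complex.add_re, Complex.sub_re, Complex.add_im, Complex.sub_im,
      Complex.ofReal_re, Complex.ofReal_im, Complex.re_ofNat, Complex.im_ofNat,
      zero_mul, mul_zero, sub_zero] at h'
    linear_combination h'
  have hr8 : 2 * (star (dominoStates 8) ⬝ᵥ (a ⊗ₖ b).mulVec (dominoStates 8)).re =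
      ((a 0 0).re - (a 0 1).re - (a 1 0).re + (a 1 1).re) * (b 2 2).re := by
    have h' := congrArg Complex.re hn8
    rw [hdiagB 2] at h'
    simp only [Complex.mul_re, Complex.add_re, Complex.sub_re, Complex.add_im, Complex.sub_im,
      Complex.ofReal_re, Complex.ofReal_im, Complex.re_ofNat, Complex.im_ofNat,
      zero_mul, mul_zero, sub_zero] at h'
    linear_combination h'
  have hrc78 : 2 * (star (dominoStates 7) ⬝ᵥ (a ⊗ₖ b).mulVec (dominoStates 8)).re =
      ((a 0 0).re - (a 0 1).re + (a 1 0).re - (a 1 1).re) * (b 2 2).re := by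
    have h' := congrArg Complex.re hnc78
    rw [hdiagB 2] at h'
    simp only [Complex.mul_re, Complex.add_re, Complex.sub_re, Complex.add_im, Complex.sub_im,
      Complex.ofReal_re, Complex.ofReal_im, Complex.re_ofNat, Complex.im_ofNat,
      zero_mul, mul_zero, sub_zero] at h'
    linear_combination h'
  have hB2pos : 0 < (b 2 2).re := by
    rcases (hBnn 2).lt_or_eq with h | h
    · exact h
    · exfalso; rw [← h, mul_zero] at hr7; linarith
  have hC78 : ‖star (dominoStates 7) ⬝ᵥ (a ⊗ₖ b).mulVec (dominoStates 8)‖ ≤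
      disturbance dominoStates a b *
        Real.sqrt ((star (dominoStates 7) ⬝ᵥ (a ⊗ₖ b).mulVec (dominoStates 7)).re *
          (star (dominoStates 8) ⬝ᵥ (a ⊗ₖ b).mulVec (dominoStates 8)).re) := by
    have h : ‖star (dominoStates 7) ⬝ᵥ (a ⊗ₖ b).mulVec (dominoStates 8)‖ /
        Real.sqrt ((star (dominoStates 7) ⬝ᵥ (a ⊗ₖ b).mulVec (dominoStates 7)).re *
          (star (dominoStates 8) ⬝ᵥ (a ⊗ₖ b).mulVec (dominoStates 8)).re) ≤
        disturbance dominoStates a b := hδge ⟨(7, 8), by decide⟩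
    rw [div_le_iff₀ (Real.sqrt_pos.mpr (mul_pos hpos7 hpos8))] at h
    exact h
  have habs78 : |(star (dominoStates 7) ⬝ᵥ (a ⊗ₖ b).mulVec (dominoStates 8)).re| ≤
      ‖star (dominoStates 7) ⬝ᵥ (a ⊗ₖ b).mulVec (dominoStates 8)‖ := by
    exact Complex.abs_re_le_norm _
  have hv01 : |(a 0 0).re - (a 1 1).re| ≤
      disturbance dominoStates a b * ((a 0 0).re + (a 1 1).re) := by
    refine pair_bound (disturbance dominoStates a b) _ _ _ _ ((b 2 2).re) _ _
      hδ0 hpos7 hpos8 hB2pos ?_ ?_ habs78 hC78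
    · linear_combination hr7 / 2 + hr8 / 2
    · linear_combination hrc78 + (b 2 2).re * hoffA01
  -- ## trace
  have ta : a.trace = a 0 0 + a 1 1 + a 2 2 := by
    simp [Matrix.trace, Matrix.diag, Fin.sum_univ_three]
  have tb : b.trace = b 0 0 + b 1 1 + b 2 2 := by
    simp [Matrix.trace, Matrix.diag, Fin.sum_univ_three]
  have htr : ((a ⊗ₖ b).trace).re =
      ((a 0 0).re + (a 1 1).re + (a 2 2).re) * ((b 0 0).re + (b 1 1).re + (b 2 2).re) := by
    rw [Matrix.trace_kronecker, ta, tb, hdiagA 0, hdiagA 1, hdiagA 2, hdiagB 0, hdiagB 1,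
      hdiagB 2, ← Complex.ofReal_add, ← Complex.ofReal_add, ← Complex.ofReal_add,
      ← Complex.ofReal_add, ← Complex.ofReal_mul, Complex.ofReal_re]
    simp
  -- ## conclusion
  rw [hdiagA i, hdiagB j, hdiagA k, hdiagB t, ← Complex.ofReal_mul, ← Complex.ofReal_mul,
    ← Complex.ofReal_sub, Complex.norm_real, Real.norm_eq_abs, htr]
  exact endgame (disturbance dominoStates a b) _ _ (fun m => (a m m).re) (fun m => (b m m).re)
    hAnn hBnn hδ0 rfl rfl hv01 hv12 hw01 hw12 i j k t
end
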